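/- arXiv:1906.07256 — 4 statements merged into one kernel-verified Lean document; each statement's English description precedes it below -/
import Mathlib

section
/- Let ω ∈ (0,1) be irrational with convergent denominators {q_n}_{n≥1} and suppose β(ω) := limsup_{n→∞} (log q_{n+1})/q_n < ∞. Let α ∈ (0,1] and let φ : T → ℝ be α-Hölder continuous. Then there is a constant C = C(ω) such that for all N ≥ 2, the Birkhoff sums of φ over the translation T_ω satisfy sup_{x∈T} |(1/N) φ^{(N)}(x) − ∫_T φ| ≤ C · ‖φ‖_α / (log N)^α. -/
open scoped BigOperators

noncomputable section

/-- Distance from a real number to the nearest integer, `‖t‖ = dist (t, ℤ)`. -/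
def nint (t : ℝ) : ℝ := |t - round t|

/-- The distance on the torus `ℝ/ℤ`, viewed through representatives in `ℝ`. -/
def distT (x y : ℝ) : ℝ := nint (x - y)

/-- Birkhoff sum `φ^(N)(x) = Σ_{j<N} φ(x + jω)` of `φ` over the translation by `ω`. -/
def birkhoff (φ : ℝ → ℝ) (ω : ℝ) (N : ℕ) (x : ℝ) : ℝ :=
  ∑ j ∈ Finset.range N, φ (x + (j : ℝ) * ω)

/-- Sup norm of an observable on the torus. -/
def supNorm (φ : ℝ → ℝ) : ℝ := sSup {r : ℝ | ∃ x : ℝ, r = |φ x|}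

/-- Hölder seminorm of an observable on the torus. -/
def holderSemi (α : ℝ) (φ : ℝ → ℝ) : ℝ :=
  sSup {r : ℝ | ∃ x y : ℝ, distT x y ≠ 0 ∧ r = |φ x - φ y| / distT x y ^ α}

/-- The Hölder norm `‖φ‖_α`. -/
def holderNorm (α : ℝ) (φ : ℝ → ℝ) : ℝ := supNorm φ + holderSemi α φ

/-- `φ` is `α`-Hölder continuous as a function on the torus `ℝ/ℤ`. -/
def IsHolderT (α : ℝ) (φ : ℝ → ℝ) : Prop :=
  ∃ C : ℝ, ∀ x y : ℝ, |φ x - φ y| ≤ C * distT x y ^ α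

/-- The Diophantine condition `DC(𝕋)_γ`: `‖kω‖ ≥ γ/(|k| log²(|k|+1))` for all `k ≠ 0`. -/
def DiophCond (γ ω : ℝ) : Prop :=
  ∀ k : ℤ, k ≠ 0 → nint ((k : ℝ) * ω) ≥ γ / (|(k : ℝ)| * Real.log (|(k : ℝ)| + 1) ^ 2)

/-- Iterates of the Gauss map, starting at the fractional part of `ω`. -/
def gaussIter (ω : ℝ) : ℕ → ℝ
  | 0 => Int.fract ω
  | n + 1 => Int.fract (1 / gaussIter ω n)

/-- The continued fraction partial quotient `a_{n+1}` of `ω`. -/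
def cfa (ω : ℝ) (n : ℕ) : ℕ := (⌊1 / gaussIter ω n⌋).toNat

/-- The denominators of the principal convergents of `ω`:
`q 0 = 1`, `q 1 = a 1`, `q (n+2) = a (n+2) * q (n+1) + q n`. -/
def qden (ω : ℝ) : ℕ → ℕ
  | 0 => 1
  | 1 => cfa ω 0
  | n + 2 => cfa ω (n + 1) * qden ω (n + 1) + qden ω n

namespace Stmt9

def pnum (ω : ℝ) : ℕ → ℕ
  | 0 => 0
  | 1 => 1
  | n + 2 => cfa ω (n + 1) * pnum ω (n + 1) + pnum ω n

def betaP (ω : ℝ) (n : ℕ) : ℝ := ∏ k ∈ Finset.range (n + 1), gaussIter ω k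

variable {ω : ℝ}

lemma gauss_mem (hω : ω ∈ Set.Ioo (0:ℝ) 1) (hirr : Irrational ω) (n : ℕ) :
    gaussIter ω n ∈ Set.Ioo (0:ℝ) 1 ∧ Irrational (gaussIter ω n) := by
  induction n with
  | zero =>
    have : Int.fract ω = ω := Int.fract_eq_self.2 ⟨hω.1.le, hω.2⟩
    simpa [gaussIter, this] using ⟨hω, hirr⟩
  | succ n ih =>
    obtain ⟨⟨h0, h1⟩, hi⟩ := ih
    have hinv : Irrational (1 / gaussIter ω n) := by
      simpa [one_div] using hi.inv
    have hfr : Irrational (Int.fract (1 / gaussIter ω n)) := by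
      unfold Int.fract
      exact Irrational.sub_intCast hinv _
    refine ⟨⟨?_, ?_⟩, by simpa [gaussIter] using hfr⟩
    · rcases lt_or_eq_of_le (Int.fract_nonneg (1 / gaussIter ω n)) with h | h
      · simpa [gaussIter] using h
      · exfalso; exact (h ▸ hfr) ⟨0, by simp⟩
    · simpa [gaussIter] using Int.fract_lt_one (1 / gaussIter ω n)

lemma one_le_floor (hω : ω ∈ Set.Ioo (0:ℝ) 1) (hirr : Irrational ω) (n : ℕ) :
    1 ≤ ⌊1 / gaussIter ω n⌋ := by
  obtain ⟨⟨h0, h1⟩, _⟩ := gauss_mem hω hirr n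
  have : (1:ℝ) ≤ 1 / gaussIter ω n := (le_div_iff₀ h0).2 (by linarith)
  exact Int.le_floor.2 (by exact_mod_cast this)

lemma cfa_cast (hω : ω ∈ Set.Ioo (0:ℝ) 1) (hirr : Irrational ω) (n : ℕ) :
    (cfa ω n : ℝ) = (⌊1 / gaussIter ω n⌋ : ℝ) := by
  have := one_le_floor hω hirr n
  unfold cfa
  rw [← Int.cast_natCast, Int.toNat_of_nonneg (by omega)]

lemma one_le_cfa (hω : ω ∈ Set.Ioo (0:ℝ) 1) (hirr : Irrational ω) (n : ℕ) :
    1 ≤ cfa ω n := by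
  have := one_le_floor hω hirr n
  unfold cfa; omega

lemma gauss_key (hω : ω ∈ Set.Ioo (0:ℝ) 1) (hirr : Irrational ω) (n : ℕ) :
    gaussIter ω n * ((cfa ω n : ℝ) + gaussIter ω (n + 1)) = 1 := by
  obtain ⟨⟨h0, _⟩, _⟩ := gauss_mem hω hirr n
  have h1 : (cfa ω n : ℝ) + gaussIter ω (n + 1) = 1 / gaussIter ω n := by
    rw [cfa_cast hω hirr n]
    show (⌊1 / gaussIter ω n⌋ : ℝ) + Int.fract (1 / gaussIter ω n) = 1 / gaussIter ω n
    exact Int.floor_add_fract _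
  rw [h1]
  field_simp

lemma one_le_qden (hω : ω ∈ Set.Ioo (0:ℝ) 1) (hirr : Irrational ω) (n : ℕ) :
    1 ≤ qden ω n := by
  induction n using Nat.strong_induction_on with
  | _ n ih =>
    match n with
    | 0 => simp [qden]
    | 1 => simpa [qden] using one_le_cfa hω hirr 0
    | n + 2 =>
      have h1 := ih (n+1) (by omega)
      have h2 := one_le_cfa hω hirr (n+1)
      show 1 ≤ cfa ω (n+1) * qden ω (n+1) + qden ω n
      nlinarith

lemma qden_mono (hω : ω ∈ Set.Ioo (0:ℝ) 1) (hirr : Irrational ω) (n : ℕ) :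
    qden ω n ≤ qden ω (n + 1) := by
  match n with
  | 0 => simpa [qden] using one_le_cfa hω hirr 0
  | n + 1 =>
    have h1 := one_le_qden hω hirr n
    have h2 := one_le_qden hω hirr (n+1)
    have h3 := one_le_cfa hω hirr (n+1)
    show qden ω (n+1) ≤ cfa ω (n+1) * qden ω (n+1) + qden ω n
    nlinarith

lemma qden_mono' (hω : ω ∈ Set.Ioo (0:ℝ) 1) (hirr : Irrational ω) {m n : ℕ} (h : m ≤ n) :
    qden ω m ≤ qden ω n := by
  induction n with
  | zero => simpa [Nat.le_zero.1 h]
  | succ n ih =>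
    rcases Nat.le_succ_iff.1 h with h' | h'
    · exact le_trans (ih h') (qden_mono hω hirr n)
    · rw [h']

lemma qden_lb (hω : ω ∈ Set.Ioo (0:ℝ) 1) (hirr : Irrational ω) (k : ℕ) :
    k + 1 ≤ qden ω (2 * k) := by
  induction k with
  | zero => simp [qden]
  | succ k ih =>
    have h1 := one_le_qden hω hirr (2*k+1)
    have h2 := one_le_cfa hω hirr (2*k+1)
    have : qden ω (2*(k+1)) = cfa ω (2*k+1) * qden ω (2*k+1) + qden ω (2*k) := by
      show qden ω (2*k+2) = _
      rfl
    rw [this]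
    nlinarith

lemma betaP_pos (hω : ω ∈ Set.Ioo (0:ℝ) 1) (hirr : Irrational ω) (n : ℕ) :
    0 < betaP ω n :=
  Finset.prod_pos fun k _ => (gauss_mem hω hirr k).1.1

lemma betaP_succ (n : ℕ) : betaP ω (n + 1) = betaP ω n * gaussIter ω (n + 1) :=
  Finset.prod_range_succ _ _

lemma theta_eq (hω : ω ∈ Set.Ioo (0:ℝ) 1) (hirr : Irrational ω) (n : ℕ) :
    (qden ω n : ℝ) * ω - (pnum ω n : ℝ) = (-1) ^ n * betaP ω n := by
  have hω0 : gaussIter ω 0 = ω := by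
    show Int.fract ω = ω
    exact Int.fract_eq_self.2 ⟨hω.1.le, hω.2⟩
  have base0 : (qden ω 0 : ℝ) * ω - (pnum ω 0 : ℝ) = (-1) ^ 0 * betaP ω 0 := by
    simp [qden, pnum, betaP, hω0]
  have base1 : (qden ω 1 : ℝ) * ω - (pnum ω 1 : ℝ) = (-1) ^ 1 * betaP ω 1 := by
    have key := gauss_key hω hirr 0
    rw [hω0] at key
    simp only [qden, pnum, betaP]
    rw [Finset.prod_range_succ, Finset.prod_range_one, hω0]
    push_cast
    nlinarith
  have step : ∀ m : ℕ,
      (qden ω m : ℝ) * ω - (pnum ω m : ℝ) = (-1) ^ m * betaP ω m →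
      (qden ω (m+1) : ℝ) * ω - (pnum ω (m+1) : ℝ) = (-1) ^ (m+1) * betaP ω (m+1) →
      (qden ω (m+2) : ℝ) * ω - (pnum ω (m+2) : ℝ) = (-1) ^ (m+2) * betaP ω (m+2) := by
    intro m h1 h2
    have key := gauss_key hω hirr (m + 1)
    have hb1 : betaP ω (m+1) = betaP ω m * gaussIter ω (m+1) := betaP_succ m
    have hb2 : betaP ω (m+2) = betaP ω (m+1) * gaussIter ω (m+2) := betaP_succ (m+1)
    have hq : (qden ω (m+2) : ℝ) = (cfa ω (m+1) : ℝ) * (qden ω (m+1) : ℝ) + (qden ω m : ℝ) := by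
      show ((cfa ω (m+1) * qden ω (m+1) + qden ω m : ℕ) : ℝ) = _
      push_cast; ring
    have hp : (pnum ω (m+2) : ℝ) = (cfa ω (m+1) : ℝ) * (pnum ω (m+1) : ℝ) + (pnum ω m : ℝ) := by
      show ((cfa ω (m+1) * pnum ω (m+1) + pnum ω m : ℕ) : ℝ) = _
      push_cast; ring
    rw [hq, hp, hb2, hb1]
    rw [hb1] at h2
    linear_combination (cfa ω (m+1) : ℝ) * h2 + h1 - ((-1:ℝ)^m * betaP ω m) * key
  have main : ∀ m : ℕ,
      ((qden ω m : ℝ) * ω - (pnum ω m : ℝ) = (-1) ^ m * betaP ω m) ∧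
      ((qden ω (m+1) : ℝ) * ω - (pnum ω (m+1) : ℝ) = (-1) ^ (m+1) * betaP ω (m+1)) := by
    intro m
    induction m with
    | zero => exact ⟨base0, base1⟩
    | succ k ih => exact ⟨ih.2, step k ih.1 ih.2⟩
  exact (main n).1

lemma U_identity (hω : ω ∈ Set.Ioo (0:ℝ) 1) (hirr : Irrational ω) (n : ℕ) :
    (qden ω (n+1) : ℝ) * betaP ω n + (qden ω n : ℝ) * betaP ω (n+1) = 1 := by
  have hω0 : gaussIter ω 0 = ω := Int.fract_eq_self.2 ⟨hω.1.le, hω.2⟩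
  induction n with
  | zero =>
    have key := gauss_key hω hirr 0
    simp only [qden, betaP, Finset.prod_range_succ, Finset.prod_range_zero, Nat.cast_one]
    linear_combination key
  | succ m ih =>
    have key := gauss_key hω hirr (m + 1)
    have hb1 : betaP ω (m+1) = betaP ω m * gaussIter ω (m+1) := betaP_succ m
    have hb2 : betaP ω (m+2) = betaP ω (m+1) * gaussIter ω (m+2) := betaP_succ (m+1)
    have hq : (qden ω (m+2) : ℝ) = (cfa ω (m+1) : ℝ) * (qden ω (m+1) : ℝ) + (qden ω m : ℝ) := by
      show ((cfa ω (m+1) * qden ω (m+1) + qden ω m : ℕ) : ℝ) = _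
      push_cast; ring
    rw [hq, hb2, hb1]
    rw [hb1] at ih
    linear_combination ih + ((qden ω (m+1) : ℝ) * betaP ω m) * key

lemma betaP_le (hω : ω ∈ Set.Ioo (0:ℝ) 1) (hirr : Irrational ω) (n : ℕ) :
    betaP ω n ≤ 1 / (qden ω (n+1) : ℝ) := by
  have hU := U_identity hω hirr n
  have h1 : (0:ℝ) < qden ω (n+1) := by exact_mod_cast one_le_qden hω hirr (n+1)
  have h2 : (0:ℝ) ≤ (qden ω n : ℝ) * betaP ω (n+1) := by
    have := (betaP_pos hω hirr (n+1)).le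
    positivity
  rw [le_div_iff₀ h1]
  nlinarith

lemma determinant (n : ℕ) :
    (pnum ω (n+1) : ℤ) * (qden ω n : ℤ) - (pnum ω n : ℤ) * (qden ω (n+1) : ℤ) = (-1) ^ n := by
  induction n with
  | zero => simp [pnum, qden]
  | succ m ih =>
    have hq : (qden ω (m+2) : ℤ) = (cfa ω (m+1) : ℤ) * (qden ω (m+1) : ℤ) + (qden ω m : ℤ) := by
      show ((cfa ω (m+1) * qden ω (m+1) + qden ω m : ℕ) : ℤ) = _
      push_cast; ring
    have hp : (pnum ω (m+2) : ℤ) = (cfa ω (m+1) : ℤ) * (pnum ω (m+1) : ℤ) + (pnum ω m : ℤ) := by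
      show ((cfa ω (m+1) * pnum ω (m+1) + pnum ω m : ℕ) : ℤ) = _
      push_cast; ring
    rw [hq, hp]
    linear_combination (-1 : ℤ) * ih

lemma coprime_pq (n : ℕ) : Nat.Coprime (pnum ω n) (qden ω n) := by
  have hd := determinant (ω := ω) n
  have : IsCoprime (pnum ω n : ℤ) (qden ω n : ℤ) := by
    refine ⟨-((-1)^n) * (qden ω (n+1) : ℤ), ((-1)^n) * (pnum ω (n+1) : ℤ), ?_⟩
    have h2 : ((-1:ℤ)^n) * ((-1:ℤ)^n) = 1 := by
      rw [← pow_add]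
      exact Even.neg_one_pow ⟨n, rfl⟩
    linear_combination ((-1:ℤ)^n) * hd + h2
  rw [Int.isCoprime_iff_gcd_eq_one] at this
  simpa [Int.gcd_natCast_natCast] using this


lemma nint_nonneg (t : ℝ) : 0 ≤ nint t := abs_nonneg _

lemma nint_le_abs (t : ℝ) : nint t ≤ |t| := by
  rw [nint, abs_sub_round_eq_min]
  rcases le_or_gt 0 t with h | h
  · calc min (Int.fract t) (1 - Int.fract t) ≤ Int.fract t := min_le_left _ _
      _ ≤ t := by
          have h0 : (0:ℝ) ≤ (⌊t⌋:ℝ) := by exact_mod_cast Int.floor_nonneg.2 h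
          rw [Int.fract]; linarith
      _ ≤ |t| := le_abs_self t
  · have hf : ⌊t⌋ ≤ -1 := by
      have := Int.floor_le t
      have : ⌊t⌋ < 0 := Int.floor_lt.2 (by norm_num [h])
      omega
    calc min (Int.fract t) (1 - Int.fract t) ≤ 1 - Int.fract t := min_le_right _ _
      _ = 1 + (⌊t⌋ : ℝ) - t := by rw [Int.fract]; push_cast; ring
      _ ≤ -t := by
        have : ((⌊t⌋ : ℝ)) ≤ -1 := by exact_mod_cast hf
        linarith
      _ ≤ |t| := (neg_le_abs t)

lemma nint_le_half (t : ℝ) : nint t ≤ 1 / 2 := abs_sub_round t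

lemma nint_sub_int (t : ℝ) (k : ℤ) : nint (t - k) = nint t := by
  rw [nint, nint, round_sub_intCast]
  push_cast
  ring_nf

lemma nint_eq_zero {t : ℝ} (h : nint t = 0) : ∃ k : ℤ, t = k := by
  refine ⟨round t, ?_⟩
  have := abs_eq_zero.1 h
  linarith

variable {α : ℝ} {φ : ℝ → ℝ}

lemma distT_half : distT 0 (1/2) ≠ 0 := by
  have : distT 0 (1/2) = |(-(1/2) : ℝ) - round ((-(1/2)):ℝ)| := by
    norm_num [distT, nint]
  rw [this, round_eq]
  norm_num

lemma holderSemi_bddAbove (hα : α ∈ Set.Ioc (0:ℝ) 1) (hH : IsHolderT α φ) :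
    BddAbove {r : ℝ | ∃ x y : ℝ, distT x y ≠ 0 ∧ r = |φ x - φ y| / distT x y ^ α} := by
  obtain ⟨C, hC⟩ := hH
  refine ⟨C, fun r hr => ?_⟩
  obtain ⟨x, y, hd, rfl⟩ := hr
  have hd0 : 0 < distT x y := lt_of_le_of_ne (nint_nonneg _) (Ne.symm hd)
  have hpow : 0 < distT x y ^ α := Real.rpow_pos_of_pos hd0 α
  rw [div_le_iff₀ hpow]
  exact hC x y

lemma holderSemi_nonneg (hα : α ∈ Set.Ioc (0:ℝ) 1) (hH : IsHolderT α φ) :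
    0 ≤ holderSemi α φ := by
  have h0 : |φ 0 - φ (1/2)| / distT 0 (1/2) ^ α ∈
      {r : ℝ | ∃ x y : ℝ, distT x y ≠ 0 ∧ r = |φ x - φ y| / distT x y ^ α} :=
    ⟨0, 1/2, distT_half, rfl⟩
  refine le_trans ?_ (le_csSup (holderSemi_bddAbove hα hH) h0)
  exact div_nonneg (abs_nonneg _) (Real.rpow_nonneg (nint_nonneg _) _)

lemma holder_bound (hα : α ∈ Set.Ioc (0:ℝ) 1) (hper : Function.Periodic φ 1)
    (hH : IsHolderT α φ) (x y : ℝ) :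
    |φ x - φ y| ≤ holderSemi α φ * distT x y ^ α := by
  rcases eq_or_ne (distT x y) 0 with hd | hd
  · obtain ⟨k, hk⟩ := nint_eq_zero hd
    have hxy : x = y + (k : ℝ) * 1 := by rw [mul_one]; linarith
    have : φ x = φ y := by rw [hxy, (hper.int_mul k) y]
    simp [this, hd, Real.zero_rpow hα.1.ne']
  · have hmem : |φ x - φ y| / distT x y ^ α ∈
        {r : ℝ | ∃ x y : ℝ, distT x y ≠ 0 ∧ r = |φ x - φ y| / distT x y ^ α} :=
      ⟨x, y, hd, rfl⟩
    have hle := le_csSup (holderSemi_bddAbove hα hH) hmem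
    have hd0 : 0 < distT x y := lt_of_le_of_ne (nint_nonneg _) (Ne.symm hd)
    have hpow : 0 < distT x y ^ α := Real.rpow_pos_of_pos hd0 α
    calc |φ x - φ y| = |φ x - φ y| / distT x y ^ α * distT x y ^ α := by field_simp
      _ ≤ holderSemi α φ * distT x y ^ α := by
          exact mul_le_mul_of_nonneg_right hle hpow.le

lemma distT_rpow_le_one (hα : α ∈ Set.Ioc (0:ℝ) 1) (x y : ℝ) : distT x y ^ α ≤ 1 :=
  Real.rpow_le_one (nint_nonneg _) (le_trans (nint_le_half _) (by norm_num)) hα.1.le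

lemma supNorm_bddAbove (hα : α ∈ Set.Ioc (0:ℝ) 1) (hper : Function.Periodic φ 1)
    (hH : IsHolderT α φ) : BddAbove {r : ℝ | ∃ x : ℝ, r = |φ x|} := by
  refine ⟨|φ 0| + holderSemi α φ, fun r hr => ?_⟩
  obtain ⟨x, rfl⟩ := hr
  have h1 : |φ x - φ 0| ≤ holderSemi α φ * distT x 0 ^ α := holder_bound hα hper hH x 0
  have h2 : holderSemi α φ * distT x 0 ^ α ≤ holderSemi α φ :=
    mul_le_of_le_one_right (holderSemi_nonneg hα hH) (distT_rpow_le_one hα x 0)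
  calc |φ x| ≤ |φ 0| + |φ x - φ 0| := by
        have := abs_sub_abs_le_abs_sub (φ x) (φ 0)
        linarith [abs_nonneg (φ x - φ 0)]
    _ ≤ |φ 0| + holderSemi α φ := by linarith

lemma sup_bound (hα : α ∈ Set.Ioc (0:ℝ) 1) (hper : Function.Periodic φ 1)
    (hH : IsHolderT α φ) (x : ℝ) : |φ x| ≤ supNorm φ :=
  le_csSup (supNorm_bddAbove hα hper hH) ⟨x, rfl⟩

lemma supNorm_nonneg (hα : α ∈ Set.Ioc (0:ℝ) 1) (hper : Function.Periodic φ 1)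
    (hH : IsHolderT α φ) : 0 ≤ supNorm φ :=
  le_trans (abs_nonneg (φ 0)) (sup_bound hα hper hH 0)

lemma phi_cont (hα : α ∈ Set.Ioc (0:ℝ) 1) (hper : Function.Periodic φ 1)
    (hH : IsHolderT α φ) : Continuous φ := by
  rw [continuous_iff_continuousAt]
  intro x₀
  rw [ContinuousAt, tendsto_iff_dist_tendsto_zero]
  have hb : ∀ y : ℝ, dist (φ y) (φ x₀) ≤ holderSemi α φ * |y - x₀| ^ α := by
    intro y
    have h1 := holder_bound hα hper hH y x₀
    have h2 : distT y x₀ ^ α ≤ |y - x₀| ^ α :=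
      Real.rpow_le_rpow (nint_nonneg _) (nint_le_abs _) hα.1.le
    calc dist (φ y) (φ x₀) = |φ y - φ x₀| := rfl
      _ ≤ holderSemi α φ * distT y x₀ ^ α := h1
      _ ≤ holderSemi α φ * |y - x₀| ^ α :=
          mul_le_mul_of_nonneg_left h2 (holderSemi_nonneg hα hH)
  have hcont : Continuous fun y : ℝ => holderSemi α φ * |y - x₀| ^ α := by
    refine continuous_const.mul ?_
    exact ((continuous_id.sub continuous_const).abs).rpow_const fun y => Or.inr hα.1.le
  have htend : Filter.Tendsto (fun y : ℝ => holderSemi α φ * |y - x₀| ^ α)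
      (nhds x₀) (nhds 0) := by
    have := hcont.continuousAt (x := x₀)
    rw [ContinuousAt] at this
    simpa [Real.zero_rpow hα.1.ne'] using this
  exact squeeze_zero (fun y => dist_nonneg) hb htend


lemma sum_mod_perm {q p : ℕ} (hq : 0 < q) (hco : Nat.Coprime p q) (g : ℕ → ℝ) :
    ∑ j ∈ Finset.range q, g (j * p % q) = ∑ i ∈ Finset.range q, g i := by
  have hinj : ∀ a ∈ Finset.range q, ∀ b ∈ Finset.range q,
      a * p % q = b * p % q → a = b := by
    intro a ha b hb hab
    have hmod : a ≡ b [MOD q] := by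
      have : a * p ≡ b * p [MOD q] := hab
      exact Nat.ModEq.cancel_right_of_coprime (by rwa [Nat.coprime_comm] at hco) this
    have := Nat.ModEq.eq_of_lt_of_lt hmod (Finset.mem_range.1 ha) (Finset.mem_range.1 hb)
    exact this
  have hsub : Finset.image (fun j => j * p % q) (Finset.range q) ⊆ Finset.range q := by
    intro i hi
    obtain ⟨j, _, rfl⟩ := Finset.mem_image.1 hi
    exact Finset.mem_range.2 (Nat.mod_lt _ hq)
  have hcard : (Finset.image (fun j => j * p % q) (Finset.range q)).card =
      (Finset.range q).card := Finset.card_image_of_injOn hinj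
  have himg : Finset.image (fun j => j * p % q) (Finset.range q) = Finset.range q :=
    Finset.eq_of_subset_of_card_le hsub (le_of_eq hcard.symm)
  calc ∑ j ∈ Finset.range q, g (j * p % q)
      = ∑ i ∈ Finset.image (fun j => j * p % q) (Finset.range q), g i :=
        (Finset.sum_image hinj).symm
    _ = ∑ i ∈ Finset.range q, g i := by rw [himg]

variable {φ : ℝ → ℝ} {α : ℝ}

lemma integral_translate (hper : Function.Periodic φ 1) (hcont : Continuous φ) (x : ℝ) :
    ∫ t in (0:ℝ)..1, φ (x + t) = ∫ t in (0:ℝ)..1, φ t := by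
  have h1 : ∫ t in (0:ℝ)..1, φ (x + t) = ∫ t in (x + 0)..(x + 1), φ t :=
    intervalIntegral.integral_comp_add_left φ x
  rw [h1]
  have h2 := hper.intervalIntegral_add_eq x 0
  simpa using h2

lemma birkhoff_q_est {ω : ℝ} (hω : ω ∈ Set.Ioo (0:ℝ) 1) (hirr : Irrational ω)
    (hα : α ∈ Set.Ioc (0:ℝ) 1) (hper : Function.Periodic φ 1) (hH : IsHolderT α φ)
    (n : ℕ) (x : ℝ) :
    |birkhoff φ ω (qden ω n) x - (qden ω n : ℝ) * ∫ t in (0:ℝ)..1, φ t| ≤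
      2 * holderSemi α φ * (qden ω n : ℝ) * ((qden ω n : ℝ)⁻¹) ^ α := by
  set q : ℕ := qden ω n with hqdef
  set p : ℕ := pnum ω n with hpdef
  have hq1 : 1 ≤ q := one_le_qden hω hirr n
  have hQ0 : (0:ℝ) < q := by exact_mod_cast hq1
  have hQ1 : (1:ℝ) ≤ q := by exact_mod_cast hq1
  set H := holderSemi α φ with hHdef
  have hH0 : 0 ≤ H := holderSemi_nonneg hα hH
  have hcont := phi_cont hα hper hH
  set ε : ℝ := ((q:ℝ)⁻¹) ^ α with hepsdef
  have heps0 : 0 ≤ ε := Real.rpow_nonneg (by positivity) _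
  -- approximations
  have htheta := theta_eq hω hirr n
  have hbeta := betaP_le hω hirr n
  have hbeta0 := (betaP_pos hω hirr n).le
  have hqq : (qden ω n : ℝ) ≤ (qden ω (n+1) : ℝ) := by
    exact_mod_cast qden_mono hω hirr n
  have habs : |(q:ℝ) * ω - (p:ℝ)| = betaP ω n := by
    rw [htheta, abs_mul, abs_pow, abs_neg, abs_one, one_pow, one_mul,
      abs_of_nonneg hbeta0]
  have hbeta1 : betaP ω n ≤ (q:ℝ)⁻¹ := by
    refine le_trans hbeta ?_
    rw [one_div]
    exact inv_anti₀ hQ0 hqq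
  -- step 1 : compare with rational rotation
  have step1 : |(∑ j ∈ Finset.range q, φ (x + (j:ℝ) * ω)) -
      ∑ j ∈ Finset.range q, φ (x + (j * p : ℕ) / (q:ℝ))| ≤ (q:ℝ) * (H * ε) := by
    rw [← Finset.sum_sub_distrib]
    refine le_trans (Finset.abs_sum_le_sum_abs _ _) ?_
    have hterm : ∀ j ∈ Finset.range q,
        |φ (x + (j:ℝ) * ω) - φ (x + (j * p : ℕ) / (q:ℝ))| ≤ H * ε := by
      intro j hj
      have hjq : (j:ℝ) ≤ q := by
        exact_mod_cast (Finset.mem_range.1 hj).le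
      have hd : distT (x + (j:ℝ) * ω) (x + (j * p : ℕ) / (q:ℝ)) ≤ (q:ℝ)⁻¹ := by
        have heq : (x + (j:ℝ) * ω) - (x + (j * p : ℕ) / (q:ℝ)) =
            (j:ℝ) * (ω - (p:ℝ)/(q:ℝ)) := by
          push_cast
          field_simp
          ring
        rw [distT, heq]
        refine le_trans (nint_le_abs _) ?_
        rw [abs_mul, abs_of_nonneg (by positivity : (0:ℝ) ≤ (j:ℝ))]
        have h3 : |ω - (p:ℝ)/(q:ℝ)| = betaP ω n / q := by
          rw [← habs, show ω - (p:ℝ)/(q:ℝ) = ((q:ℝ) * ω - p)/(q:ℝ) by field_simp,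
            abs_div, abs_of_nonneg hQ0.le]
        rw [h3]
        calc (j:ℝ) * (betaP ω n / q) ≤ (q:ℝ) * (betaP ω n / q) := by
              exact mul_le_mul_of_nonneg_right hjq (by positivity)
          _ = betaP ω n := by field_simp
          _ ≤ (q:ℝ)⁻¹ := hbeta1
      have hd2 : distT (x + (j:ℝ) * ω) (x + (j * p : ℕ) / (q:ℝ)) ^ α ≤ ε :=
        Real.rpow_le_rpow (nint_nonneg _) hd hα.1.le
      calc |φ (x + (j:ℝ) * ω) - φ (x + (j * p : ℕ) / (q:ℝ))|
          ≤ H * distT (x + (j:ℝ) * ω) (x + (j * p : ℕ) / (q:ℝ)) ^ α :=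
            holder_bound hα hper hH _ _
        _ ≤ H * ε := mul_le_mul_of_nonneg_left hd2 hH0
    calc ∑ j ∈ Finset.range q, |φ (x + (j:ℝ) * ω) - φ (x + (j * p : ℕ) / (q:ℝ))|
        ≤ ∑ _j ∈ Finset.range q, H * ε := Finset.sum_le_sum hterm
      _ = (q:ℝ) * (H * ε) := by rw [Finset.sum_const, Finset.card_range]; simp [nsmul_eq_mul]
  -- step 2 : permutation
  have step2 : ∑ j ∈ Finset.range q, φ (x + (j * p : ℕ) / (q:ℝ)) =
      ∑ i ∈ Finset.range q, φ (x + (i : ℕ) / (q:ℝ)) := by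
    have hco : Nat.Coprime p q := coprime_pq n
    have hrw : ∀ j : ℕ, φ (x + (j * p : ℕ) / (q:ℝ)) = φ (x + (j * p % q : ℕ) / (q:ℝ)) := by
      intro j
      have hdm : (q * (j * p / q) + j * p % q : ℕ) = j * p := Nat.div_add_mod _ _
      have : (x + (j * p : ℕ) / (q:ℝ)) =
          (x + (j * p % q : ℕ) / (q:ℝ)) + ((j * p / q : ℕ) : ℝ) * 1 := by
        rw [mul_one]
        have : ((j * p : ℕ) : ℝ) = (q : ℝ) * ((j * p / q : ℕ) : ℝ) + ((j * p % q : ℕ) : ℝ) := by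
          exact_mod_cast congrArg (Nat.cast (R := ℝ)) hdm.symm
        rw [this]
        field_simp
        ring
      rw [this, (hper.nat_mul (j * p / q)) _]
    calc ∑ j ∈ Finset.range q, φ (x + (j * p : ℕ) / (q:ℝ))
        = ∑ j ∈ Finset.range q, φ (x + (j * p % q : ℕ) / (q:ℝ)) := by
          exact Finset.sum_congr rfl fun j _ => hrw j
      _ = ∑ i ∈ Finset.range q, φ (x + (i : ℕ) / (q:ℝ)) :=
          sum_mod_perm (by omega) hco (fun i => φ (x + (i : ℕ) / (q:ℝ)))
  -- step 3 : Riemann sum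
  have step3 : |(∑ i ∈ Finset.range q, φ (x + (i:ℝ) / (q:ℝ))) -
      (q:ℝ) * ∫ t in (0:ℝ)..1, φ t| ≤ (q:ℝ) * (H * ε) := by
    have htrans := integral_translate hper hcont x
    have hcx : Continuous fun t : ℝ => φ (x + t) := hcont.comp (by continuity)
    have hint : ∀ a b : ℝ, IntervalIntegrable (fun t => φ (x + t)) MeasureTheory.volume a b :=
      fun a b => hcx.intervalIntegrable a b
    have hRiemann : ∑ i ∈ Finset.range q, ∫ t in ((i:ℝ)/(q:ℝ))..(((i:ℝ)+1)/(q:ℝ)), φ (x + t) =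
        ∫ t in (0:ℝ)..1, φ (x + t) := by
      have hadj := intervalIntegral.sum_integral_adjacent_intervals
          (a := fun k : ℕ => (k:ℝ)/(q:ℝ)) (μ := MeasureTheory.volume)
          (f := fun t => φ (x + t)) (n := q) (fun k _ => hint _ _)
      rw [show ((0:ℕ):ℝ)/(q:ℝ) = (0:ℝ) by norm_num,
        show ((q:ℕ):ℝ)/(q:ℝ) = (1:ℝ) by field_simp] at hadj
      rw [← hadj]
      refine Finset.sum_congr rfl fun i _ => ?_
      push_cast
      norm_num
    have hterm : ∀ i ∈ Finset.range q,
        |φ (x + (i:ℝ)/(q:ℝ)) - (q:ℝ) * ∫ t in ((i:ℝ)/(q:ℝ))..(((i:ℝ)+1)/(q:ℝ)), φ (x + t)|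
          ≤ H * ε := by
      intro i _
      have hlen : ((i:ℝ)+1)/(q:ℝ) - (i:ℝ)/(q:ℝ) = (q:ℝ)⁻¹ := by field_simp; ring
      have hconst : φ (x + (i:ℝ)/(q:ℝ)) =
          (q:ℝ) * ∫ t in ((i:ℝ)/(q:ℝ))..(((i:ℝ)+1)/(q:ℝ)), φ (x + (i:ℝ)/(q:ℝ)) := by
        rw [intervalIntegral.integral_const, hlen]
        rw [smul_eq_mul]
        field_simp
      rw [hconst]
      rw [← mul_sub, ← intervalIntegral.integral_sub (by
        exact intervalIntegrable_const) (hint _ _)]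
      rw [abs_mul, abs_of_nonneg hQ0.le]
      have hbound : ∀ t ∈ Set.uIoc ((i:ℝ)/(q:ℝ)) (((i:ℝ)+1)/(q:ℝ)),
          ‖φ (x + (i:ℝ)/(q:ℝ)) - φ (x + t)‖ ≤ H * ε := by
        intro t ht
        have hle0 : (i:ℝ)/(q:ℝ) ≤ ((i:ℝ)+1)/(q:ℝ) := by gcongr; linarith
        rw [Set.uIoc_of_le hle0] at ht
        obtain ⟨ht1, ht2⟩ := ht
        have hdt : distT (x + (i:ℝ)/(q:ℝ)) (x + t) ≤ (q:ℝ)⁻¹ := by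
          rw [distT]
          have heq : (x + (i:ℝ)/(q:ℝ)) - (x + t) = (i:ℝ)/(q:ℝ) - t := by ring
          rw [heq]
          refine le_trans (nint_le_abs _) ?_
          rw [abs_sub_comm, abs_of_nonneg (by linarith)]
          have : t ≤ (i:ℝ)/(q:ℝ) + (q:ℝ)⁻¹ := by
            rw [← hlen] at *
            linarith
          linarith
        have hdt2 : distT (x + (i:ℝ)/(q:ℝ)) (x + t) ^ α ≤ ε :=
          Real.rpow_le_rpow (nint_nonneg _) hdt hα.1.le
        calc ‖φ (x + (i:ℝ)/(q:ℝ)) - φ (x + t)‖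
            ≤ H * distT (x + (i:ℝ)/(q:ℝ)) (x + t) ^ α := holder_bound hα hper hH _ _
          _ ≤ H * ε := mul_le_mul_of_nonneg_left hdt2 hH0
      have := intervalIntegral.norm_integral_le_of_norm_le_const hbound
      rw [hlen] at this
      calc (q:ℝ) * ‖∫ t in ((i:ℝ)/(q:ℝ))..(((i:ℝ)+1)/(q:ℝ)),
            (φ (x + (i:ℝ)/(q:ℝ)) - φ (x + t))‖
          ≤ (q:ℝ) * (H * ε * |(q:ℝ)⁻¹|) := by
            exact mul_le_mul_of_nonneg_left this hQ0.le
        _ = H * ε * ((q:ℝ) * (q:ℝ)⁻¹) := by rw [abs_of_nonneg (by positivity)]; ring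
        _ = H * ε := by rw [mul_inv_cancel₀ hQ0.ne']; ring
    -- assemble step 3
    have hsplit : (∑ i ∈ Finset.range q, φ (x + (i:ℝ)/(q:ℝ))) -
        (q:ℝ) * ∫ t in (0:ℝ)..1, φ t =
        ∑ i ∈ Finset.range q,
          (φ (x + (i:ℝ)/(q:ℝ)) - (q:ℝ) * ∫ t in ((i:ℝ)/(q:ℝ))..(((i:ℝ)+1)/(q:ℝ)), φ (x + t)) := by
      rw [Finset.sum_sub_distrib, ← Finset.mul_sum]
      congr 1
      rw [← htrans, ← hRiemann]
    rw [hsplit]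
    refine le_trans (Finset.abs_sum_le_sum_abs _ _) ?_
    calc ∑ i ∈ Finset.range q,
          |φ (x + (i:ℝ)/(q:ℝ)) - (q:ℝ) * ∫ t in ((i:ℝ)/(q:ℝ))..(((i:ℝ)+1)/(q:ℝ)), φ (x + t)|
        ≤ ∑ _i ∈ Finset.range q, H * ε := Finset.sum_le_sum hterm
      _ = (q:ℝ) * (H * ε) := by rw [Finset.sum_const, Finset.card_range]; simp [nsmul_eq_mul]
  -- assemble
  have hb : birkhoff φ ω q x = ∑ j ∈ Finset.range q, φ (x + (j:ℝ) * ω) := rfl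
  have hcast : ∀ i : ℕ, ((i : ℕ) : ℝ) = (i:ℝ) := fun _ => rfl
  calc |birkhoff φ ω q x - (q:ℝ) * ∫ t in (0:ℝ)..1, φ t|
      = |((∑ j ∈ Finset.range q, φ (x + (j:ℝ) * ω)) -
          ∑ j ∈ Finset.range q, φ (x + (j * p : ℕ) / (q:ℝ))) +
         ((∑ i ∈ Finset.range q, φ (x + (i:ℝ) / (q:ℝ))) -
          (q:ℝ) * ∫ t in (0:ℝ)..1, φ t)| := by
        rw [hb, step2]
        congr 1
        push_cast
        ring
    _ ≤ (q:ℝ) * (H * ε) + (q:ℝ) * (H * ε) := by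
        refine le_trans (abs_add_le _ _) (add_le_add step1 step3)
    _ = 2 * H * (q:ℝ) * ε := by ring

lemma birkhoff_add (φ : ℝ → ℝ) (ω : ℝ) (A B : ℕ) (x : ℝ) :
    birkhoff φ ω (A + B) x = birkhoff φ ω A x + birkhoff φ ω B (x + (A:ℝ) * ω) := by
  induction B with
  | zero => simp [birkhoff]
  | succ B ih =>
    have l : birkhoff φ ω (A + B + 1) x =
        birkhoff φ ω (A + B) x + φ (x + ((A + B : ℕ) : ℝ) * ω) :=
      Finset.sum_range_succ _ _
    have r : birkhoff φ ω (B + 1) (x + (A:ℝ) * ω) =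
        birkhoff φ ω B (x + (A:ℝ) * ω) + φ ((x + (A:ℝ) * ω) + (B:ℝ) * ω) :=
      Finset.sum_range_succ _ _
    have h3 : x + ((A + B : ℕ) : ℝ) * ω = (x + (A:ℝ) * ω) + (B:ℝ) * ω := by
      push_cast; ring
    rw [show A + (B + 1) = A + B + 1 by omega, l, r, ih, h3]
    ring

lemma birkhoff_mul (φ : ℝ → ℝ) (ω : ℝ) (m q : ℕ) (x : ℝ) :
    birkhoff φ ω (m * q) x =
      ∑ k ∈ Finset.range m, birkhoff φ ω q (x + ((k * q : ℕ) : ℝ) * ω) := by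
  induction m with
  | zero => simp [birkhoff]
  | succ m ih =>
    rw [show (m + 1) * q = m * q + q by ring, birkhoff_add, ih, Finset.sum_range_succ]

lemma main_est {ω : ℝ} (hω : ω ∈ Set.Ioo (0:ℝ) 1) (hirr : Irrational ω) {α : ℝ}
    {φ : ℝ → ℝ} (hα : α ∈ Set.Ioc (0:ℝ) 1) (hper : Function.Periodic φ 1)
    (hH : IsHolderT α φ) (n N : ℕ) (hN : 1 ≤ N) (x : ℝ) :
    |(1 / (N : ℝ)) * birkhoff φ ω N x - ∫ t in (0:ℝ)..1, φ t| ≤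
      2 * holderSemi α φ * ((qden ω n : ℝ)⁻¹) ^ α +
        2 * supNorm φ * (qden ω n : ℝ) / (N : ℝ) := by
  classical
  set q : ℕ := qden ω n with hqdef
  set H := holderSemi α φ with hHdef
  set M := supNorm φ with hMdef
  set ε : ℝ := ((q:ℝ)⁻¹) ^ α with hepsdef
  set I : ℝ := ∫ t in (0:ℝ)..1, φ t with hIdef
  have hq1 : 1 ≤ q := one_le_qden hω hirr n
  have hQ0 : (0:ℝ) < q := by exact_mod_cast hq1
  have hN0 : (0:ℝ) < N := by exact_mod_cast hN
  have hH0 : 0 ≤ H := holderSemi_nonneg hα hH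
  have hM0 : 0 ≤ M := supNorm_nonneg hα hper hH
  have heps0 : 0 ≤ ε := Real.rpow_nonneg (by positivity) _
  have hMb : ∀ y, |φ y| ≤ M := sup_bound hα hper hH
  have hI : |I| ≤ M := by
    have h1 : ∀ t ∈ Set.uIoc (0:ℝ) 1, ‖φ t‖ ≤ M := fun t _ => hMb t
    have := intervalIntegral.norm_integral_le_of_norm_le_const h1
    simpa using this
  set m : ℕ := N / q with hmdef
  set r : ℕ := N % q with hrdef
  have hNd : m * q + r = N := by
    exact Nat.div_add_mod' N q
  have hr : r < q := Nat.mod_lt _ (by omega)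
  have hsplit : birkhoff φ ω N x =
      (∑ k ∈ Finset.range m, birkhoff φ ω q (x + ((k * q : ℕ) : ℝ) * ω)) +
        birkhoff φ ω r (x + ((m * q : ℕ) : ℝ) * ω) := by
    rw [← hNd, birkhoff_add, birkhoff_mul]
  have hblock : ∀ y : ℝ, |birkhoff φ ω q y - (q:ℝ) * I| ≤ 2 * H * (q:ℝ) * ε :=
    fun y => birkhoff_q_est hω hirr hα hper hH n y
  have hrem : ∀ y : ℝ, |birkhoff φ ω r y - (r:ℝ) * I| ≤ 2 * (q:ℝ) * M := by
    intro y
    have h1 : |birkhoff φ ω r y| ≤ (r:ℝ) * M := by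
      refine le_trans (Finset.abs_sum_le_sum_abs _ _) ?_
      calc ∑ j ∈ Finset.range r, |φ (y + (j:ℝ) * ω)| ≤ ∑ _j ∈ Finset.range r, M :=
            Finset.sum_le_sum fun j _ => hMb _
        _ = (r:ℝ) * M := by rw [Finset.sum_const, Finset.card_range]; simp [nsmul_eq_mul]
    have h2 : |(r:ℝ) * I| ≤ (r:ℝ) * M := by
      rw [abs_mul, abs_of_nonneg (by positivity : (0:ℝ) ≤ (r:ℝ))]
      exact mul_le_mul_of_nonneg_left hI (by positivity)
    have hrq : (r:ℝ) ≤ (q:ℝ) := by exact_mod_cast hr.le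
    calc |birkhoff φ ω r y - (r:ℝ) * I| ≤ |birkhoff φ ω r y| + |(r:ℝ) * I| := abs_sub _ _
      _ ≤ (r:ℝ) * M + (r:ℝ) * M := add_le_add h1 h2
      _ ≤ 2 * (q:ℝ) * M := by nlinarith
  have htot : |birkhoff φ ω N x - (N:ℝ) * I| ≤ (m:ℝ) * (2 * H * (q:ℝ) * ε) + 2 * (q:ℝ) * M := by
    have hNI : (N:ℝ) * I = (∑ _k ∈ Finset.range m, (q:ℝ) * I) + (r:ℝ) * I := by
      rw [Finset.sum_const, Finset.card_range]
      have : ((m * q + r : ℕ) : ℝ) = (N:ℝ) := by exact_mod_cast congrArg (Nat.cast (R := ℝ)) hNd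
      push_cast at this
      rw [nsmul_eq_mul]
      linear_combination (-I) * this
    rw [hsplit, hNI]
    have hre : (∑ k ∈ Finset.range m, birkhoff φ ω q (x + ((k * q : ℕ) : ℝ) * ω)) +
        birkhoff φ ω r (x + ((m * q : ℕ) : ℝ) * ω) -
        ((∑ _k ∈ Finset.range m, (q:ℝ) * I) + (r:ℝ) * I) =
        (∑ k ∈ Finset.range m, (birkhoff φ ω q (x + ((k * q : ℕ) : ℝ) * ω) - (q:ℝ) * I)) +
          (birkhoff φ ω r (x + ((m * q : ℕ) : ℝ) * ω) - (r:ℝ) * I) := by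
      rw [Finset.sum_sub_distrib]; ring
    rw [hre]
    refine le_trans (abs_add_le _ _) (add_le_add ?_ (hrem _))
    refine le_trans (Finset.abs_sum_le_sum_abs _ _) ?_
    calc ∑ k ∈ Finset.range m, |birkhoff φ ω q (x + ((k * q : ℕ) : ℝ) * ω) - (q:ℝ) * I|
        ≤ ∑ _k ∈ Finset.range m, 2 * H * (q:ℝ) * ε := Finset.sum_le_sum fun k _ => hblock _
      _ = (m:ℝ) * (2 * H * (q:ℝ) * ε) := by
          rw [Finset.sum_const, Finset.card_range]; simp [nsmul_eq_mul]
  have hmq : (m:ℝ) * (q:ℝ) ≤ (N:ℝ) := by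
    have := Nat.div_mul_le_self N q
    exact_mod_cast this
  have havg : (1 / (N:ℝ)) * birkhoff φ ω N x - I = (1 / (N:ℝ)) * (birkhoff φ ω N x - (N:ℝ) * I) := by
    field_simp
  rw [havg, abs_mul, abs_of_nonneg (by positivity : (0:ℝ) ≤ 1 / (N:ℝ))]
  have key : (m:ℝ) * (2 * H * (q:ℝ) * ε) + 2 * (q:ℝ) * M ≤
      (2 * H * ε + 2 * M * (q:ℝ) / (N:ℝ)) * (N:ℝ) := by
    rw [add_mul, div_mul_cancel₀ _ hN0.ne']
    nlinarith [mul_nonneg (mul_nonneg (by norm_num : (0:ℝ) ≤ 2) hH0) heps0, hmq]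
  calc (1 / (N:ℝ)) * |birkhoff φ ω N x - (N:ℝ) * I|
      ≤ (1 / (N:ℝ)) * ((2 * H * ε + 2 * M * (q:ℝ) / (N:ℝ)) * (N:ℝ)) := by
        refine mul_le_mul_of_nonneg_left (le_trans htot key) (by positivity)
    _ = 2 * H * ε + 2 * M * (q:ℝ) / (N:ℝ) := by field_simp

end Stmt9

open Stmt9

/-- bound (2.12): if `β(ω) = limsup (log q_{n+1})/q_n < ∞` (expressed as an
eventual bound on the ratios) then for `α`-Hölder `φ`,
`sup_x |(1/N) φ^(N)(x) − ∫ φ| ≤ C(ω) ‖φ‖_α / (log N)^α`. -/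
theorem stmt9 (ω : ℝ) (hω : ω ∈ Set.Ioo (0 : ℝ) 1) (hirr : Irrational ω)
    (hβ : ∃ B : ℝ, ∀ᶠ n in Filter.atTop,
      Real.log (qden ω (n + 1) : ℝ) / (qden ω n : ℝ) ≤ B) :
    ∃ C : ℝ, 0 < C ∧
      ∀ (α : ℝ) (φ : ℝ → ℝ),
        α ∈ Set.Ioc (0 : ℝ) 1 → Function.Periodic φ 1 → IsHolderT α φ →
        ∀ N : ℕ, 2 ≤ N → ∀ x : ℝ,
          |(1 / (N : ℝ)) * birkhoff φ ω N x - ∫ t in (0:ℝ)..1, φ t| ≤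
            C * holderNorm α φ / Real.log (N : ℝ) ^ α := by
  classical
  obtain ⟨B, hB⟩ := hβ
  rw [Filter.eventually_atTop] at hB
  obtain ⟨n₀, hn₀⟩ := hB
  set B' : ℝ := max B 1 with hB'def
  have hB'1 : (1:ℝ) ≤ B' := le_max_right _ _
  set N₀ : ℕ := (qden ω n₀) ^ 2 with hN₀def
  have hN₀1 : 1 ≤ N₀ := Nat.one_le_pow _ _ (by have := one_le_qden hω hirr n₀; omega)
  have hlog₀ : 0 ≤ Real.log N₀ := Real.log_nonneg (by exact_mod_cast hN₀1)
  refine ⟨4 * B' + 2 * (Real.log N₀ + 1), by linarith, ?_⟩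
  set C : ℝ := 4 * B' + 2 * (Real.log N₀ + 1) with hCdef
  intro α φ hα hper hH N hN2 x
  set hnorm : ℝ := holderNorm α φ with hnormdef
  have hhn : hnorm = supNorm φ + holderSemi α φ := rfl
  have hH0 : 0 ≤ holderSemi α φ := holderSemi_nonneg hα hH
  have hM0 : 0 ≤ supNorm φ := supNorm_nonneg hα hper hH
  have hhn0 : 0 ≤ hnorm := by rw [hhn]; linarith
  have hN1 : 1 ≤ N := by omega
  have hN0R : (0:ℝ) < N := by exact_mod_cast hN1
  have hlogN : 0 < Real.log N := Real.log_pos (by exact_mod_cast hN2)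
  set X : ℝ := Real.log N ^ α with hXdef
  have hX : 0 < X := Real.rpow_pos_of_pos hlogN α
  -- choice of the scale n
  set P : ℕ → Prop := fun k => (qden ω k) ^ 2 ≤ N with hPdef
  set n : ℕ := Nat.findGreatest P (2 * N) with hndef
  have hP0 : P 0 := by
    show (qden ω 0) ^ 2 ≤ N
    have : qden ω 0 = 1 := rfl
    rw [this]; omega
  have hPn : P n := Nat.findGreatest_spec (Nat.zero_le _) hP0
  have hnot2N : ¬ P (2 * N) := by
    intro hcon
    have h := qden_lb hω hirr N
    rw [hPdef] at hcon
    nlinarith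
  have hnle : n ≤ 2 * N := Nat.findGreatest_le _
  have hne : n ≠ 2 * N := fun h => hnot2N (h ▸ hPn)
  have hPsucc : ¬ P (n + 1) :=
    Nat.findGreatest_is_greatest (Nat.lt_succ_self n) (by omega)
  -- main estimate
  have hmain := main_est hω hirr hα hper hH n N hN1 x
  set q : ℕ := qden ω n with hqdef
  have hq1 : 1 ≤ q := one_le_qden hω hirr n
  have hQ0 : (0:ℝ) < q := by exact_mod_cast hq1
  have hQ1 : (1:ℝ) ≤ q := by exact_mod_cast hq1
  set ε : ℝ := ((q:ℝ)⁻¹) ^ α with hepsdef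
  have heps0 : 0 ≤ ε := Real.rpow_nonneg (by positivity) _
  have hq2 : (q:ℝ) ^ 2 ≤ (N:ℝ) := by exact_mod_cast hPn
  have hinvle : (q:ℝ)⁻¹ ≤ ε := by
    have h1 : ((q:ℝ)⁻¹) ^ (1:ℝ) ≤ ((q:ℝ)⁻¹) ^ α :=
      Real.rpow_le_rpow_of_exponent_ge (by positivity) (inv_le_one_of_one_le₀ hQ1) hα.2
    simpa [Real.rpow_one] using h1
  have hA : 2 * supNorm φ * (q:ℝ) / (N:ℝ) ≤ 2 * supNorm φ * ε := by
    have hqN : (q:ℝ) / (N:ℝ) ≤ (q:ℝ)⁻¹ := by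
      rw [div_le_iff₀ hN0R]
      have h2 : (q:ℝ)⁻¹ * ((q:ℝ)^2) ≤ (q:ℝ)⁻¹ * (N:ℝ) :=
        mul_le_mul_of_nonneg_left hq2 (by positivity)
      have h3 : (q:ℝ)⁻¹ * ((q:ℝ)^2) = (q:ℝ) := by field_simp
      linarith
    calc 2 * supNorm φ * (q:ℝ) / (N:ℝ) = (2 * supNorm φ) * ((q:ℝ) / (N:ℝ)) := by ring
      _ ≤ (2 * supNorm φ) * ((q:ℝ)⁻¹) := by
          exact mul_le_mul_of_nonneg_left hqN (by linarith)
      _ ≤ (2 * supNorm φ) * ε := mul_le_mul_of_nonneg_left hinvle (by linarith)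
      _ = 2 * supNorm φ * ε := by ring
  have hkey : |(1 / (N : ℝ)) * birkhoff φ ω N x - ∫ t in (0:ℝ)..1, φ t| ≤
      2 * hnorm * ε := by
    calc |(1 / (N : ℝ)) * birkhoff φ ω N x - ∫ t in (0:ℝ)..1, φ t|
        ≤ 2 * holderSemi α φ * ε + 2 * supNorm φ * (q:ℝ) / (N:ℝ) := hmain
      _ ≤ 2 * holderSemi α φ * ε + 2 * supNorm φ * ε := by linarith
      _ = 2 * hnorm * ε := by rw [hhn]; ring
  rcases le_or_gt n₀ n with hge | hlt
  · -- Diophantine regime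
    have hq' := hn₀ n hge
    have hQn1 : (0:ℝ) < (qden ω (n+1) : ℝ) := by
      exact_mod_cast one_le_qden hω hirr (n+1)
    have hlogq : Real.log (qden ω (n+1) : ℝ) ≤ B' * (q:ℝ) := by
      rw [div_le_iff₀ hQ0] at hq'
      calc Real.log (qden ω (n+1) : ℝ) ≤ B * (q:ℝ) := hq'
        _ ≤ B' * (q:ℝ) := mul_le_mul_of_nonneg_right (le_max_left _ _) hQ0.le
    have hNlt : (N:ℝ) < ((qden ω (n+1) : ℝ)) ^ 2 := by
      have : N < (qden ω (n+1)) ^ 2 := by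
        rw [hPdef] at hPsucc; omega
      exact_mod_cast this
    have hlogle : Real.log N ≤ 2 * B' * (q:ℝ) := by
      calc Real.log N ≤ Real.log (((qden ω (n+1) : ℝ)) ^ 2) :=
            Real.log_le_log hN0R hNlt.le
        _ = 2 * Real.log (qden ω (n+1) : ℝ) := by
            rw [Real.log_pow]; push_cast; ring
        _ ≤ 2 * (B' * (q:ℝ)) := by linarith
        _ = 2 * B' * (q:ℝ) := by ring
    have hinv2 : (q:ℝ)⁻¹ ≤ 2 * B' / Real.log N := by
      rw [inv_eq_one_div, div_le_div_iff₀ hQ0 hlogN]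
      linarith
    have heps2 : ε ≤ 2 * B' / X := by
      calc ε ≤ (2 * B' / Real.log N) ^ α :=
            Real.rpow_le_rpow (by positivity) hinv2 hα.1.le
        _ = (2 * B') ^ α / X := Real.div_rpow (by linarith) hlogN.le α
        _ ≤ 2 * B' / X := by
            refine (div_le_div_iff_of_pos_right hX).2 ?_
            have h4 := Real.rpow_le_rpow_of_exponent_le (by linarith : (1:ℝ) ≤ 2*B') hα.2
            simpa [Real.rpow_one] using h4
    calc |(1 / (N : ℝ)) * birkhoff φ ω N x - ∫ t in (0:ℝ)..1, φ t|
        ≤ 2 * hnorm * ε := hkey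
      _ ≤ 2 * hnorm * (2 * B' / X) := mul_le_mul_of_nonneg_left heps2 (by linarith)
      _ = (4 * B') * hnorm / X := by ring
      _ ≤ C * hnorm / X := by
          have hC4 : 4 * B' ≤ C := by rw [hCdef]; linarith
          exact (div_le_div_iff_of_pos_right hX).2 (mul_le_mul_of_nonneg_right hC4 hhn0)
  · -- small N regime
    have hNN₀ : N < N₀ := by
      have h1 : qden ω (n+1) ≤ qden ω n₀ := qden_mono' hω hirr (by omega)
      have h2 : N < (qden ω (n+1)) ^ 2 := by rw [hPdef] at hPsucc; omega
      rw [hN₀def]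
      nlinarith
    have heps1 : ε ≤ 1 := Real.rpow_le_one (by positivity) (inv_le_one_of_one_le₀ hQ1) hα.1.le
    have hXle : X ≤ 1 + Real.log N₀ := by
      rcases le_or_gt (Real.log N) 1 with h | h
      · calc X ≤ 1 := Real.rpow_le_one hlogN.le h hα.1.le
          _ ≤ 1 + Real.log N₀ := by linarith
      · have h1 : X ≤ Real.log N ^ (1:ℝ) :=
          Real.rpow_le_rpow_of_exponent_le h.le hα.2
        rw [Real.rpow_one] at h1
        have h2 : Real.log N ≤ Real.log N₀ :=
          Real.log_le_log hN0R (by exact_mod_cast hNN₀.le)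
        linarith
    have h2C : 2 ≤ C / X := by
      rw [le_div_iff₀ hX]
      have : 2 * X ≤ 2 * (1 + Real.log N₀) := by linarith
      rw [hCdef]
      linarith
    calc |(1 / (N : ℝ)) * birkhoff φ ω N x - ∫ t in (0:ℝ)..1, φ t|
        ≤ 2 * hnorm * ε := hkey
      _ ≤ 2 * hnorm * 1 := mul_le_mul_of_nonneg_left heps1 (by linarith)
      _ = 2 * hnorm := by ring
      _ ≤ (C / X) * hnorm := mul_le_mul_of_nonneg_right h2C hhn0
      _ = C * hnorm / X := by ring
end
end

section
/- Let w : [0,∞) → [0,∞) be a modulus of continuity, let γ > 0, let ω ∈ T satisfy the Diophantine condition DC(T)_γ, and let φ : T → ℝ have modulus of continuity w, i.e. φ ∈ C^w(T). Then there is an absolute constant C such that for all N ≥ 2, the Birkhoff sums of φ over the translation T_ω satisfy sup_{x∈T} |(1/N) φ^{(N)}(x) − ∫_T φ| ≤ C · (1/γ) · log(1/γ) · ‖φ‖_w · w((log N)^4 / N). -/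
open scoped BigOperators

noncomputable section

/-- `w : [0,∞) → [0,∞)` is a modulus of continuity: strictly increasing, sub-additive,
continuous, nonnegative, and `w 0 = 0`. -/
def IsModulus (w : ℝ → ℝ) : Prop :=
  StrictMonoOn w (Set.Ici 0) ∧
  (∀ s t : ℝ, 0 ≤ s → 0 ≤ t → w (s + t) ≤ w s + w t) ∧
  ContinuousOn w (Set.Ici 0) ∧ w 0 = 0 ∧ ∀ t : ℝ, 0 ≤ t → 0 ≤ w t

/-- `φ ∈ C^w(𝕋)`: `φ` has modulus of continuity `w` on the torus. -/
def IsCw (w φ : ℝ → ℝ) : Prop :=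
  ∃ C : ℝ, ∀ x y : ℝ, |φ x - φ y| ≤ C * w (distT x y)

/-- The norm `‖φ‖_w` of `C^w(𝕋)`. -/
def wNorm (w φ : ℝ → ℝ) : ℝ :=
  supNorm φ + sSup {r : ℝ | ∃ x y : ℝ, w (distT x y) ≠ 0 ∧ r = |φ x - φ y| / w (distT x y)}

lemma IsModulus.mono {w : ℝ → ℝ} (hw : IsModulus w) {s t : ℝ} (hs : 0 ≤ s) (hst : s ≤ t) :
    w s ≤ w t := hw.1.monotoneOn hs (hs.trans hst) hst

lemma IsModulus.nonneg {w : ℝ → ℝ} (hw : IsModulus w) {t : ℝ} (ht : 0 ≤ t) : 0 ≤ w t :=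
  hw.2.2.2.2 t ht

lemma IsModulus.nsmul {w : ℝ → ℝ} (hw : IsModulus w) {t : ℝ} (ht : 0 ≤ t) (k : ℕ) :
    w ((k : ℝ) * t) ≤ (k : ℝ) * w t := by
  induction k with
  | zero => simp [hw.2.2.2.1]
  | succ k ih =>
      push_cast
      have := hw.2.1 ((k:ℝ)*t) t (by positivity) ht
      calc w ((k+1)*t) = w ((k:ℝ)*t + t) := by ring_nf
        _ ≤ w ((k:ℝ)*t) + w t := this
        _ ≤ (k:ℝ) * w t + w t := by linarith
        _ = ((k:ℝ)+1) * w t := by ring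

lemma IsModulus.ratio {w : ℝ → ℝ} (hw : IsModulus w) {s t : ℝ} (hs : 0 ≤ s) (ht : 0 < t) :
    w s ≤ (s / t + 1) * w t := by
  have hst : s ≤ (⌈s / t⌉₊ : ℝ) * t := by
    rw [← div_le_iff₀ ht]
    exact Nat.le_ceil _
  have h1 : w s ≤ w ((⌈s / t⌉₊ : ℝ) * t) := hw.mono hs hst
  have h2 := hw.nsmul ht.le ⌈s / t⌉₊
  have h3 : (⌈s / t⌉₊ : ℝ) ≤ s / t + 1 := (Nat.ceil_lt_add_one (by positivity)).le
  have hwt : 0 ≤ w t := hw.nonneg ht.le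
  nlinarith [hw.nonneg (show (0:ℝ) ≤ (⌈s / t⌉₊ : ℝ) * t by positivity)]


lemma nint_nonneg (t : ℝ) : 0 ≤ nint t := abs_nonneg _
lemma nint_le_abs (t : ℝ) : nint t ≤ |t| := by simpa [nint] using round_le t 0
lemma nint_le_half (t : ℝ) : nint t ≤ 1/2 := abs_sub_round t
lemma nint_le_int (t : ℝ) (z : ℤ) : nint t ≤ |t - z| := round_le t z
lemma distT_le_abs (x y : ℝ) : distT x y ≤ |x - y| := nint_le_abs _
lemma distT_nonneg (x y : ℝ) : 0 ≤ distT x y := abs_nonneg _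
lemma distT_le_half (x y : ℝ) : distT x y ≤ 1/2 := abs_sub_round _


open Filter Topology

section main
variable {w φ : ℝ → ℝ} {Λ γ ω : ℝ}
variable (hw : IsModulus w) (hper : Function.Periodic φ 1)
  (hΛ0 : 0 ≤ Λ) (hΛ : ∀ x y : ℝ, |φ x - φ y| ≤ Λ * w (distT x y))
  (hcont : Continuous φ) (hγ : 0 < γ) (hdc : DiophCond γ ω)

include hper in
lemma per_int (k : ℤ) (x : ℝ) : φ (x + k) = φ x := by
  simpa using (hper.int_mul k) x

include hw hΛ hΛ0 in
lemma phi_cont : Continuous φ := by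
  rw [continuous_iff_continuousAt]
  intro x₀
  have h0 : Tendsto (fun x => |φ x - φ x₀|) (nhds x₀) (nhds 0) := by
    apply squeeze_zero (fun t => abs_nonneg _) (fun t => ?_)
    · -- g t = Λ * w |t - x₀| tends to 0
      have hwc : ContinuousWithinAt w (Set.Ici 0) 0 := hw.2.2.1 0 (Set.mem_Ici.2 le_rfl)
      have h1 : Tendsto (fun t : ℝ => |t - x₀|) (nhds x₀) (nhds 0) := by
        have : Continuous (fun t : ℝ => |t - x₀|) := by continuity
        simpa using this.tendsto x₀
      have h2 : Tendsto (fun t : ℝ => |t - x₀|) (nhds x₀) (nhdsWithin 0 (Set.Ici 0)) :=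
        tendsto_nhdsWithin_of_tendsto_nhds_of_eventually_within _ h1
          (Filter.Eventually.of_forall fun t => Set.mem_Ici.2 (abs_nonneg _))
      have h3 : Tendsto (fun t => Λ * w (|t - x₀|)) (nhds x₀) (nhds (Λ * w 0)) :=
        (tendsto_const_nhds.mul (hwc.tendsto.comp h2))
      rw [hw.2.2.2.1, mul_zero] at h3
      exact h3
    · calc |φ t - φ x₀| ≤ Λ * w (distT t x₀) := hΛ t x₀
        _ ≤ Λ * w (|t - x₀|) := by
            apply mul_le_mul_of_nonneg_left _ hΛ0
            exact hw.mono (abs_nonneg _) (by simpa [distT] using nint_le_abs (t - x₀))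
  exact tendsto_iff_norm_sub_tendsto_zero.2 (by simpa [Real.norm_eq_abs] using h0)

include hper in
lemma per_nat (k : ℕ) (x : ℝ) : φ (x + k) = φ x := by
  simpa using per_int hper (k : ℤ) x

include hw hΛ0 hΛ in
lemma osc_le {a b d : ℝ} (hd : 0 ≤ d) (hab : |a - b| ≤ d) : |φ a - φ b| ≤ Λ * w d := by
  refine (hΛ a b).trans (mul_le_mul_of_nonneg_left ?_ hΛ0)
  exact hw.mono (abs_nonneg _) ((nint_le_abs _).trans hab)

include hw hper hΛ0 hΛ hcont in
lemma riemann {q : ℕ} (hq : 1 ≤ q) (x : ℝ) :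
    |(∑ i ∈ Finset.range q, φ (x + i / q)) - q * ∫ t in (0:ℝ)..1, φ t|
      ≤ Λ * w (1 / q) * q := by
  have hq0 : (0:ℝ) < q := by exact_mod_cast hq
  obtain ⟨a, ha⟩ : ∃ a : ℕ → ℝ, a = fun i : ℕ => x + i / q := ⟨_, rfl⟩
  have hgoal : (∑ i ∈ Finset.range q, φ (x + i / q)) = ∑ i ∈ Finset.range q, φ (a i) := by
    simp [ha]
  rw [hgoal]
  have hstep : ∀ i : ℕ, a (i+1) - a i = 1 / q := by
    intro i; simp only [ha]; push_cast; field_simp; ring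
  have hsplit : ∑ i ∈ Finset.range q, ∫ t in a i..a (i+1), φ t = ∫ t in (0:ℝ)..1, φ t := by
    rw [intervalIntegral.sum_integral_adjacent_intervals
      (fun k _ => hcont.intervalIntegrable _ _)]
    have h0 : a 0 = x := by simp [ha]
    have h1 : a q = x + 1 := by
      simp only [ha]; rw [div_self (ne_of_gt hq0)]
    rw [h0, h1]
    simpa using hper.intervalIntegral_add_eq x 0
  rw [← hsplit, Finset.mul_sum, ← Finset.sum_sub_distrib]
  have hterm : ∀ i ∈ Finset.range q,
      |φ (a i) - (q:ℝ) * ∫ t in a i..a (i+1), φ t| ≤ Λ * w (1 / q) := by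
    intro i _
    have hrw : φ (a i) - (q:ℝ) * ∫ t in a i..a (i+1), φ t
        = (q:ℝ) * ∫ t in a i..a (i+1), (φ (a i) - φ t) := by
      rw [intervalIntegral.integral_sub (intervalIntegrable_const) (hcont.intervalIntegrable _ _)]
      rw [intervalIntegral.integral_const, hstep i, smul_eq_mul]
      field_simp
    rw [hrw, abs_mul, abs_of_pos hq0]
    have hbound : |∫ t in a i..a (i+1), (φ (a i) - φ t)| ≤ (Λ * w (1/q)) * |a (i+1) - a i| := by
      have := intervalIntegral.norm_integral_le_of_norm_le_const
        (C := Λ * w (1/q)) (f := fun t => φ (a i) - φ t) (a := a i) (b := a (i+1)) ?_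
      · simpa [Real.norm_eq_abs] using this
      intro t ht
      have h1 : |a i - t| ≤ 1 / q := by
        rw [Set.uIoc_of_le (by rw [← sub_nonneg, hstep i]; positivity)] at ht
        rw [abs_sub_comm, abs_of_nonneg (by linarith [ht.1.le] : (0:ℝ) ≤ t - a i)]
        have := ht.2
        have := hstep i
        linarith
      simpa [Real.norm_eq_abs] using osc_le hw hΛ0 hΛ (by positivity) h1
    rw [hstep i, abs_of_pos (by positivity : (0:ℝ) < 1/q)] at hbound
    calc (q:ℝ) * |∫ t in a i..a (i+1), (φ (a i) - φ t)| ≤ (q:ℝ) * ((Λ * w (1/q)) * (1/q)) :=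
          mul_le_mul_of_nonneg_left hbound hq0.le
      _ = Λ * w (1/q) := by field_simp
  calc |∑ i ∈ Finset.range q, (φ (a i) - (q:ℝ) * ∫ t in a i..a (i+1), φ t)|
      ≤ ∑ i ∈ Finset.range q, |φ (a i) - (q:ℝ) * ∫ t in a i..a (i+1), φ t| :=
        Finset.abs_sum_le_sum_abs _ _
    _ ≤ ∑ _i ∈ Finset.range q, Λ * w (1/q) := Finset.sum_le_sum hterm
    _ = Λ * w (1/q) * q := by rw [Finset.sum_const, Finset.card_range]; ring

include hper in
lemma grid {q : ℕ} (hq : 1 ≤ q) {p : ℤ} (hco : Int.gcd p q = 1) (x : ℝ) :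
    ∑ i ∈ Finset.range q, φ (x + i * (p:ℝ) / q) = ∑ i ∈ Finset.range q, φ (x + i / q) := by
  have hqZ : (0:ℤ) < q := by exact_mod_cast hq
  set p' : ℕ := (p % (q:ℤ)).toNat with hp'
  have hp'cast : (p' : ℤ) = p % q := Int.toNat_of_nonneg (Int.emod_nonneg p (ne_of_gt hqZ))
  -- coprimality of p' and q
  have hco' : Nat.Coprime p' q := by
    have h1 : IsCoprime p (q:ℤ) := Int.isCoprime_iff_gcd_eq_one.2 hco
    have h2 : IsCoprime ((p':ℤ)) (q:ℤ) := by
      rw [hp'cast, Int.emod_def, sub_eq_add_neg, ← mul_neg]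
      exact h1.add_mul_left_left (-(p / q))
    have := Int.isCoprime_iff_gcd_eq_one.1 h2
    simpa [Int.gcd_natCast_natCast] using this
  -- step 1 & 2: replace p by (i*p') % q
  have hstep : ∀ i : ℕ, φ (x + i * (p:ℝ) / q) = φ (x + ((i * p') % q : ℕ) / q) := by
    intro i
    have hdZ : (p:ℤ) = (q:ℤ) * (p / (q:ℤ)) + (p':ℤ) := by
      rw [hp'cast]; exact (Int.mul_ediv_add_emod p q).symm
    have hd : (p:ℝ) = (q:ℝ) * ((p / (q:ℤ) : ℤ) : ℝ) + ((p':ℕ):ℝ) := by exact_mod_cast hdZ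
    have e1 : x + i * (p:ℝ) / q = (x + i * (p':ℝ) / q) + ((i : ℤ) * (p / (q:ℤ)) : ℤ) := by
      rw [hd]; push_cast; field_simp; ring
    have hqR : (q:ℝ) ≠ 0 := by positivity
    have e2 : x + (i * p' : ℕ) / (q:ℝ) = (x + ((i * p') % q : ℕ) / q) + ((i * p' / q : ℕ) : ℝ) := by
      have hcast : ((i * p' : ℕ) : ℝ) = (q:ℝ) * ((i * p' / q : ℕ) : ℝ) + (((i * p') % q : ℕ) : ℝ) := by
        exact_mod_cast (Nat.div_add_mod (i * p') q).symm
      rw [hcast]; field_simp; ring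
    rw [e1, per_int hper]
    have : x + i * (p':ℝ) / q = x + (i * p' : ℕ) / (q:ℝ) := by push_cast; ring
    rw [this, e2, per_nat hper]
  simp_rw [hstep]
  -- step 3: bijection i ↦ (i*p') % q on range q
  have hinj : Set.InjOn (fun i => (i * p') % q) (Finset.range q) := by
    intro i hi j hj hij
    simp only [Finset.coe_range, Set.mem_Iio] at hi hj
    have : i % q = j % q := Nat.ModEq.cancel_right_of_coprime (by simpa [Nat.coprime_comm] using hco') hij
    rwa [Nat.mod_eq_of_lt hi, Nat.mod_eq_of_lt hj] at this
  have himg : Finset.image (fun i => (i * p') % q) (Finset.range q) = Finset.range q := by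
    apply Finset.eq_of_subset_of_card_le
    · intro j hj
      simp only [Finset.mem_image, Finset.mem_range] at hj ⊢
      obtain ⟨i, _, rfl⟩ := hj
      exact Nat.mod_lt _ (by omega)
    · rw [Finset.card_image_of_injOn hinj]
  conv_rhs => rw [← himg]
  rw [Finset.sum_image hinj]

include hper in
lemma block_periodic {q : ℕ} (hq : 1 ≤ q) (p : ℤ) (x : ℝ) :
    ∀ m : ℕ, ∑ i ∈ Finset.range (q*m), φ (x + i * (p:ℝ) / q)
      = m * ∑ i ∈ Finset.range q, φ (x + i * (p:ℝ) / q) := by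
  have hq0 : (0:ℝ) < q := by exact_mod_cast hq
  intro m
  induction m with
  | zero => simp
  | succ m ih =>
      have : q * (m+1) = q * m + q := by ring
      rw [this, Finset.sum_range_add, ih]
      have : ∑ i ∈ Finset.range q, φ (x + (q*m + i : ℕ) * (p:ℝ) / q)
          = ∑ i ∈ Finset.range q, φ (x + i * (p:ℝ) / q) := by
        apply Finset.sum_congr rfl
        intro i _
        have he : x + (q*m + i : ℕ) * (p:ℝ) / q = (x + i * (p:ℝ) / q) + ((m * p : ℤ) : ℝ) := by
          push_cast; field_simp; ring
        rw [he, per_int hper]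
      rw [this]; push_cast; ring

set_option maxHeartbeats 1000000 in
include hw hper hΛ0 hΛ hcont hγ hdc in
lemma one_step {n : ℕ} (hn : 1 ≤ n) :
    ∃ r : ℕ, 2 * r < n ∧ ∀ x : ℝ, ∃ y : ℝ,
      |birkhoff φ ω n x - n * ∫ t in (0:ℝ)..1, φ t| ≤
        2 * Λ * n * w (Real.log (n+1) ^ 2 / (γ * n)) +
        |birkhoff φ ω r y - r * ∫ t in (0:ℝ)..1, φ t| := by
  set I : ℝ := ∫ t in (0:ℝ)..1, φ t with hI
  obtain ⟨j, k, hk0, hkn, happ⟩ := Real.exists_int_int_abs_mul_sub_le ω (show 0 < n by omega)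
  set d : ℕ := Int.gcd j k with hd
  have hd0 : 0 < d := Int.gcd_pos_of_ne_zero_right j (ne_of_gt hk0)
  set k₁ : ℤ := k / d with hk₁
  set p : ℤ := j / d with hp
  have hdk : (d:ℤ) ∣ k := Int.gcd_dvd_right j k
  have hdj : (d:ℤ) ∣ j := Int.gcd_dvd_left j k
  have hkk : k = k₁ * d := by rw [hk₁, Int.ediv_mul_cancel hdk]
  have hjj : j = p * d := by rw [hp, Int.ediv_mul_cancel hdj]
  have hk₁0 : 0 < k₁ := by
    rcases lt_trichotomy k₁ 0 with h | h | h
    · nlinarith [hkk, (show (0:ℤ) < (d:ℤ) by exact_mod_cast hd0)]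
    · rw [hkk, h] at hk0; simp at hk0
    · exact h
  have hco : Int.gcd p k₁ = 1 := by
    have := Int.gcd_div_gcd_div_gcd (i := j) (j := k) (by exact_mod_cast hd0)
    rwa [← hd, ← hp, ← hk₁] at this
  set q : ℕ := k₁.toNat with hq
  have hqk : (q : ℤ) = k₁ := Int.toNat_of_nonneg hk₁0.le
  have hq1 : 1 ≤ q := by omega
  have hqn : q ≤ n := by
    have h1 : k₁ ≤ k := by
      rw [hk₁]; exact Int.ediv_le_self _ hk0.le
    have : (q:ℤ) ≤ (n:ℤ) := by rw [hqk]; exact h1.trans hkn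
    exact_mod_cast this
  have hq0R : (0:ℝ) < q := by exact_mod_cast hq1
  have hn0R : (0:ℝ) < n := by exact_mod_cast hn
  -- reduced approximation
  have happ' : |(q:ℝ) * ω - p| ≤ 1 / (n+1) := by
    have hdR : (1:ℝ) ≤ d := by exact_mod_cast hd0
    have hcast : (k:ℝ) = (q:ℝ) * (d:ℝ) := by
      have hZ : k = (q:ℤ) * (d:ℤ) := by rw [hqk]; exact hkk
      exact_mod_cast congrArg (Int.cast : ℤ → ℝ) hZ
    have hjcast : (j:ℝ) = (p:ℝ) * (d:ℝ) := by exact_mod_cast congrArg (Int.cast : ℤ → ℝ) hjj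
    have hfact : (k:ℝ) * ω - j = ((q:ℝ) * ω - p) * d := by rw [hcast, hjcast]; ring
    have : |(q:ℝ) * ω - p| * d ≤ 1/(n+1) := by
      calc |(q:ℝ) * ω - p| * d = |(k:ℝ) * ω - j| := by
            rw [hfact, abs_mul, abs_of_pos (by linarith : (0:ℝ) < (d:ℝ))]
        _ ≤ 1/(n+1) := by exact_mod_cast happ
    nlinarith [abs_nonneg ((q:ℝ) * ω - p)]
  -- Diophantine lower bound: 1/q ≤ log(n+1)^2/(γ n)
  have hlogq : 0 < Real.log (q+1) := Real.log_pos (by push_cast; linarith)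
  have hlogn : 0 < Real.log (n+1) := Real.log_pos (by push_cast; linarith)
  have hdioph : 1 / (q:ℝ) ≤ Real.log (n+1) ^ 2 / (γ * n) := by
    have h1 : γ / ((q:ℝ) * Real.log (q+1) ^ 2) ≤ 1/(n+1) := by
      have h2 := hdc (q:ℤ) (by exact_mod_cast Nat.one_le_iff_ne_zero.mp hq1)
      have h3 : nint ((q:ℝ) * ω) ≤ 1/(n+1) := by
        refine le_trans ?_ happ'
        have := nint_le_int ((q:ℝ) * ω) p
        simpa using this
      have h4 : |((q:ℤ):ℝ)| = (q:ℝ) := by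
        push_cast; exact abs_of_nonneg (by positivity)
      rw [h4] at h2
      calc γ / ((q:ℝ) * Real.log (q+1) ^ 2) ≤ nint ((q:ℝ) * ω) := by
            have := h2; push_cast at this ⊢; linarith
        _ ≤ 1/(n+1) := h3
    have hL : Real.log (q+1) ^ 2 ≤ Real.log (n+1) ^ 2 := by
      have : Real.log (q+1) ≤ Real.log (n+1) := by
        apply Real.log_le_log (by positivity)
        push_cast; exact_mod_cast by exact_mod_cast Nat.add_le_add_right hqn 1
      nlinarith [hlogq.le]
    have hq2 : 0 < (q:ℝ) * Real.log (q+1)^2 := by positivity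
    rw [div_le_div_iff₀ hq2 (by push_cast; positivity)] at h1
    rw [div_le_div_iff₀ hq0R (by positivity)]
    -- γ * (n+1) ≤ q * log(q+1)^2  →  1 * (γ * n) ≤ q * log(n+1)^2
    have : γ * n ≤ (q:ℝ) * Real.log (q+1)^2 := by push_cast at h1 ⊢; nlinarith
    calc 1 * (γ * n) = γ * n := by ring
      _ ≤ (q:ℝ) * Real.log (q+1)^2 := this
      _ ≤ (q:ℝ) * Real.log (n+1)^2 := by nlinarith
      _ = Real.log (n+1)^2 * q := by ring
  set s : ℝ := Real.log (n+1) ^ 2 / (γ * n) with hs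
  have hs0 : 0 < s := by rw [hs]; positivity
  have hw1q : w (1/(q:ℝ)) ≤ w s := hw.mono (by positivity) hdioph
  -- division with remainder
  set m : ℕ := n / q with hm
  set r : ℕ := n % q with hr
  have hn_eq : q * m + r = n := Nat.div_add_mod n q
  have hm1 : 1 ≤ m := (Nat.one_le_div_iff (by omega)).2 hqn
  have hrq : r < q := Nat.mod_lt _ (by omega)
  have h2r : 2 * r < n := by
    have h2 : q ≤ q * m := Nat.le_mul_of_pos_right _ (by omega)
    omega
  refine ⟨r, h2r, fun x => ?_⟩
  refine ⟨x + (q*m : ℕ) * ω, ?_⟩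
  -- split the Birkhoff sum
  have hsplit : birkhoff φ ω n x =
      (∑ i ∈ Finset.range (q*m), φ (x + i * ω)) + birkhoff φ ω r (x + (q*m : ℕ) * ω) := by
    rw [← hn_eq]
    unfold birkhoff
    rw [Finset.sum_range_add]
    congr 1
    · apply Finset.sum_congr rfl
      intro i _
      congr 1
      push_cast; ring
  -- block estimate
  have hqm_le : ((q*m : ℕ) : ℝ) ≤ (n:ℝ) := by exact_mod_cast (by omega : q*m ≤ n)
  have hblock : |(∑ i ∈ Finset.range (q*m), φ (x + i * ω)) - (q*m : ℕ) * I| ≤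
      2 * Λ * n * w (1/(q:ℝ)) := by
    have hA : |∑ i ∈ Finset.range (q*m), (φ (x + i * ω) - φ (x + i * (p:ℝ) / q))| ≤
        ((q*m : ℕ) : ℝ) * (Λ * w (1/(q:ℝ))) := by
      refine (Finset.abs_sum_le_sum_abs _ _).trans ?_
      have hbound : ∀ i ∈ Finset.range (q*m),
          |φ (x + i * ω) - φ (x + i * (p:ℝ) / q)| ≤ Λ * w (1/(q:ℝ)) := by
        intro i hi
        have hiq : (i:ℝ) ≤ n := by
          have : i < q*m := Finset.mem_range.1 hi
          have : (i:ℝ) ≤ ((q*m:ℕ):ℝ) := by exact_mod_cast Nat.le_of_lt this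
          linarith
        have hdist : |(x + i * ω) - (x + i * (p:ℝ) / q)| ≤ 1/(q:ℝ) := by
          have he : (x + i * ω) - (x + i * (p:ℝ) / q) = (i:ℝ) * ((q:ℝ)*ω - p) / q := by
            field_simp; ring
          rw [he, abs_div, abs_mul, abs_of_nonneg (by positivity : (0:ℝ) ≤ (i:ℝ)),
            abs_of_pos hq0R]
          rw [div_le_div_iff₀ (by positivity) hq0R]
          calc (i:ℝ) * |(q:ℝ)*ω - p| * q ≤ (n:ℝ) * (1/(n+1)) * q := by
                apply mul_le_mul_of_nonneg_right _ hq0R.le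
                exact mul_le_mul hiq happ' (abs_nonneg _) hn0R.le
            _ ≤ 1 * q := by
                apply mul_le_mul_of_nonneg_right _ hq0R.le
                rw [mul_one_div]
                apply div_le_one_of_le₀ <;> linarith
        exact osc_le hw hΛ0 hΛ (by positivity) hdist
      refine le_trans (Finset.sum_le_sum hbound)
        (le_of_eq (by rw [Finset.sum_const, Finset.card_range, nsmul_eq_mul]))
    have hB := block_periodic hper hq1 p x m
    have hcoq : Int.gcd p (q:ℤ) = 1 := by rw [hqk]; exact hco
    have hG := grid hper hq1 hcoq x
    have hr2 := riemann hw hper hΛ0 hΛ hcont hq1 x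
    have key : (∑ i ∈ Finset.range (q*m), φ (x + i * ω)) - ((q*m:ℕ):ℝ) * I
        = (∑ i ∈ Finset.range (q*m), (φ (x + i * ω) - φ (x + i * (p:ℝ) / q)))
          + (m:ℝ) * ((∑ i ∈ Finset.range q, φ (x + i / q)) - q * I) := by
      rw [Finset.sum_sub_distrib, hB, hG]; push_cast; ring
    have hm0R : (0:ℝ) ≤ (m:ℝ) := by positivity
    have hwq0 : 0 ≤ w (1/(q:ℝ)) := hw.nonneg (by positivity)
    calc |(∑ i ∈ Finset.range (q*m), φ (x + i * ω)) - ((q*m:ℕ):ℝ) * I|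
        ≤ |∑ i ∈ Finset.range (q*m), (φ (x + i * ω) - φ (x + i * (p:ℝ) / q))|
          + |(m:ℝ) * ((∑ i ∈ Finset.range q, φ (x + i / q)) - q * I)| := by
          rw [key]; exact abs_add_le _ _
      _ ≤ ((q*m:ℕ):ℝ) * (Λ * w (1/(q:ℝ))) + (m:ℝ) * (Λ * w (1/(q:ℝ)) * q) := by
          rw [abs_mul, abs_of_nonneg hm0R]
          exact add_le_add hA (mul_le_mul_of_nonneg_left hr2 hm0R)
      _ = 2 * ((q*m:ℕ):ℝ) * (Λ * w (1/(q:ℝ))) := by push_cast; ring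
      _ ≤ 2 * Λ * n * w (1/(q:ℝ)) := by
          have hΛw : 0 ≤ Λ * w (1/(q:ℝ)) := mul_nonneg hΛ0 hwq0
          have h2 : ((q*m:ℕ):ℝ) * (Λ * w (1/(q:ℝ))) ≤ (n:ℝ) * (Λ * w (1/(q:ℝ))) :=
            mul_le_mul_of_nonneg_right hqm_le hΛw
          nlinarith [h2]
  -- assemble
  have hnI : (n:ℝ) * I = ((q*m:ℕ):ℝ) * I + (r:ℝ) * I := by
    have : ((q*m:ℕ):ℝ) + (r:ℝ) = (n:ℝ) := by exact_mod_cast congrArg (Nat.cast : ℕ → ℝ) hn_eq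
    rw [← this]; ring
  have h2Λn : 0 ≤ 2 * Λ * (n:ℝ) := by positivity
  calc |birkhoff φ ω n x - n * I|
      = |((∑ i ∈ Finset.range (q*m), φ (x + i * ω)) - ((q*m:ℕ):ℝ) * I)
          + (birkhoff φ ω r (x + (q*m : ℕ) * ω) - (r:ℝ) * I)| := by
        rw [hsplit, hnI]; congr 1; ring
    _ ≤ |(∑ i ∈ Finset.range (q*m), φ (x + i * ω)) - ((q*m:ℕ):ℝ) * I|
          + |birkhoff φ ω r (x + (q*m : ℕ) * ω) - (r:ℝ) * I| := abs_add_le _ _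
    _ ≤ 2 * Λ * n * w s + |birkhoff φ ω r (x + (q*m : ℕ) * ω) - (r:ℝ) * I| := by
        have := mul_le_mul_of_nonneg_left hw1q h2Λn
        have hb2 := hblock
        linarith [hb2, this]

set_option maxHeartbeats 1000000 in
include hw hper hΛ0 hΛ hcont hγ hdc in
lemma induct {N : ℕ} (hN : 2 ≤ N) :
    ∀ n : ℕ, n ≤ N → ∀ x : ℝ,
      |birkhoff φ ω n x - n * ∫ t in (0:ℝ)..1, φ t| ≤
        2 * Λ * ((Real.log ((N:ℝ)+1) ^ 2 / (γ * (Real.log N ^ 4 / N))) * ((Nat.log 2 n : ℝ) + 1)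
          + 2 * n) * w (Real.log N ^ 4 / N) := by
  have hN0 : (0:ℝ) < N := by exact_mod_cast (by omega : 0 < N)
  have hN1 : (1:ℝ) < N := by exact_mod_cast (by omega : 1 < N)
  have hlogN : 0 < Real.log N := Real.log_pos hN1
  set T : ℝ := Real.log N ^ 4 / N with hT
  have hT0 : 0 < T := by rw [hT]; positivity
  set D : ℝ := Real.log ((N:ℝ)+1) ^ 2 / (γ * T) with hD
  have hD0 : 0 ≤ D := by rw [hD]; positivity
  have hwT : 0 ≤ w T := hw.nonneg hT0.le
  intro n
  induction n using Nat.strong_induction_on with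
  | _ n IH =>
    intro hnN x
    rcases Nat.eq_zero_or_pos n with h0 | h1
    · subst h0
      simp only [birkhoff, Finset.range_zero, Finset.sum_empty, Nat.cast_zero, zero_mul,
        sub_zero, abs_zero]
      have hl0 : (0:ℝ) ≤ (Nat.log 2 0 : ℝ) := by positivity
      have hc : (0:ℝ) ≤ D * ((Nat.log 2 0 : ℝ) + 1) := by nlinarith [hD0]
      nlinarith [mul_nonneg (mul_nonneg (mul_nonneg (by norm_num : (0:ℝ) ≤ 2) hΛ0) hc) hwT]
    · have hn0R : (0:ℝ) < n := by exact_mod_cast h1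
      obtain ⟨r, h2r, hstep⟩ := one_step hw hper hΛ0 hΛ hcont hγ hdc h1
      obtain ⟨y, hxy⟩ := hstep x
      -- per-level bound
      have hsn : (n:ℝ) * w (Real.log ((n:ℝ)+1) ^ 2 / (γ * n)) ≤ (D + n) * w T := by
        have hsn0 : (0:ℝ) ≤ Real.log ((n:ℝ)+1) ^ 2 / (γ * n) := by positivity
        have h1' := hw.ratio hsn0 hT0
        have h2' := mul_le_mul_of_nonneg_left h1' hn0R.le
        have h4 : (n:ℝ) * (Real.log ((n:ℝ)+1) ^ 2 / (γ * n)) = Real.log ((n:ℝ)+1) ^ 2 / γ := by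
          field_simp
        have h5 : Real.log ((n:ℝ)+1) ^ 2 / γ / T ≤ D := by
          rw [hD]
          rw [div_div, div_le_div_iff₀ (by positivity) (by positivity)]
          have hle : Real.log ((n:ℝ)+1) ≤ Real.log ((N:ℝ)+1) := by
            apply Real.log_le_log (by positivity)
            have : (n:ℝ) ≤ N := by exact_mod_cast hnN
            linarith
          have hpos : 0 ≤ Real.log ((n:ℝ)+1) := Real.log_nonneg (by linarith)
          have hsq : Real.log ((n:ℝ)+1)^2 ≤ Real.log ((N:ℝ)+1)^2 := by nlinarith [hle, hpos]
          have hγT : (0:ℝ) ≤ γ * T := by positivity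
          exact mul_le_mul_of_nonneg_right hsq hγT
        calc (n:ℝ) * w (Real.log ((n:ℝ)+1) ^ 2 / (γ * n))
            ≤ (n:ℝ) * ((Real.log ((n:ℝ)+1) ^ 2 / (γ * n)) / T + 1) * w T := by
              rw [mul_assoc]; exact h2'
          _ = (Real.log ((n:ℝ)+1) ^ 2 / γ / T + n) * w T := by
              rw [div_div]
              field_simp
          _ ≤ (D + n) * w T := by
              apply mul_le_mul_of_nonneg_right _ hwT
              rw [div_div] at h5 ⊢
              linarith
      have hfirst : 2 * Λ * (n:ℝ) * w (Real.log ((n:ℝ)+1) ^ 2 / (γ * n))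
          ≤ 2 * Λ * ((D + n) * w T) := by
        have := mul_le_mul_of_nonneg_left hsn (by linarith : (0:ℝ) ≤ 2 * Λ)
        calc 2 * Λ * (n:ℝ) * w (Real.log ((n:ℝ)+1) ^ 2 / (γ * n))
            = 2 * Λ * ((n:ℝ) * w (Real.log ((n:ℝ)+1) ^ 2 / (γ * n))) := by ring
          _ ≤ 2 * Λ * ((D + n) * w T) := this
      have hL0 : (0:ℝ) ≤ (Nat.log 2 n : ℝ) := by positivity
      rcases Nat.eq_zero_or_pos r with hr0 | hr1
      · subst hr0
        have hrem : birkhoff φ ω 0 y - (0:ℕ) * ∫ t in (0:ℝ)..1, φ t = 0 := by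
          simp [birkhoff]
        rw [hrem, abs_zero, add_zero] at hxy
        have hcoef : (D + (n:ℝ)) ≤ D * ((Nat.log 2 n : ℝ) + 1) + 2 * n := by nlinarith
        calc |birkhoff φ ω n x - n * ∫ t in (0:ℝ)..1, φ t|
            ≤ 2 * Λ * (n:ℝ) * w (Real.log ((n:ℝ)+1) ^ 2 / (γ * n)) := by
              push_cast at hxy ⊢; linarith
          _ ≤ 2 * Λ * ((D + n) * w T) := hfirst
          _ ≤ 2 * Λ * ((D * ((Nat.log 2 n : ℝ) + 1) + 2 * n) * w T) := by
              apply mul_le_mul_of_nonneg_left _ (by linarith : (0:ℝ) ≤ 2 * Λ)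
              exact mul_le_mul_of_nonneg_right hcoef hwT
          _ = 2 * Λ * (D * ((Nat.log 2 n : ℝ) + 1) + 2 * n) * w T := by ring
      · -- r ≥ 1
        have hIH := IH r (by omega) (by omega) y
        have hlogr : Nat.log 2 r + 1 ≤ Nat.log 2 n := by
          have h2' : Nat.log 2 (r * 2) = Nat.log 2 r + 1 :=
            Nat.log_mul_base (by norm_num) (by omega)
          have h3' : Nat.log 2 (r * 2) ≤ Nat.log 2 n :=
            Nat.log_mono_right (by omega)
          omega
        have hcast : (Nat.log 2 r : ℝ) + 1 ≤ (Nat.log 2 n : ℝ) := by exact_mod_cast hlogr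
        have h2rn : 2 * (r:ℝ) ≤ (n:ℝ) := by exact_mod_cast (le_of_lt h2r)
        have hcoef : (D * ((Nat.log 2 r : ℝ) + 1) + 2 * r) + (D + n)
            ≤ D * ((Nat.log 2 n : ℝ) + 1) + 2 * n := by nlinarith
        have hpos : (0:ℝ) ≤ 2 * Λ * w T := by positivity
        have hmul := mul_le_mul_of_nonneg_left hcoef hpos
        calc |birkhoff φ ω n x - n * ∫ t in (0:ℝ)..1, φ t|
            ≤ 2 * Λ * (n:ℝ) * w (Real.log ((n:ℝ)+1) ^ 2 / (γ * n))
              + |birkhoff φ ω r y - r * ∫ t in (0:ℝ)..1, φ t| := by push_cast at hxy ⊢; linarith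
          _ ≤ 2 * Λ * ((D + n) * w T)
              + 2 * Λ * (D * ((Nat.log 2 r : ℝ) + 1) + 2 * r) * w T := add_le_add hfirst hIH
          _ ≤ 2 * Λ * (D * ((Nat.log 2 n : ℝ) + 1) + 2 * n) * w T := by linarith [hmul]


end main

set_option maxHeartbeats 1000000 in
/-- Remark after Theorem 1.3, general modulus of continuity: for
`ω ∈ DC(𝕋)_γ` and `φ ∈ C^w(𝕋)`,
`sup_x |(1/N) φ^(N)(x) − ∫ φ| ≤ C (1/γ) log(1/γ) ‖φ‖_w w((log N)^4/N)`. -/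
theorem stmt10 :
    ∃ C : ℝ, 0 < C ∧
      ∀ (w : ℝ → ℝ) (γ ω : ℝ) (φ : ℝ → ℝ),
        IsModulus w → 0 < γ → DiophCond γ ω → Function.Periodic φ 1 → IsCw w φ →
        ∀ N : ℕ, 2 ≤ N → ∀ x : ℝ,
          |(1 / (N : ℝ)) * birkhoff φ ω N x - ∫ t in (0:ℝ)..1, φ t| ≤
            C * (1 / γ) * Real.log (1 / γ) * wNorm w φ *
              w (Real.log (N : ℝ) ^ 4 / (N : ℝ)) := by
  refine ⟨40, by norm_num, ?_⟩
  intro w γ ω φ hw hγ hdc hper hcw N hN x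
  obtain ⟨Cφ, hCφ⟩ := hcw
  -- the seminorm Λ
  set S : Set ℝ := {r : ℝ | ∃ x y : ℝ, w (distT x y) ≠ 0 ∧ r = |φ x - φ y| / w (distT x y)}
    with hS
  have hbdd : BddAbove S := by
    refine ⟨max Cφ 0, ?_⟩
    rintro r ⟨x, y, hne, rfl⟩
    have hw0 : 0 < w (distT x y) := lt_of_le_of_ne (hw.nonneg (distT_nonneg x y)) (Ne.symm hne)
    rw [div_le_iff₀ hw0]
    calc |φ x - φ y| ≤ Cφ * w (distT x y) := hCφ x y
      _ ≤ max Cφ 0 * w (distT x y) := mul_le_mul_of_nonneg_right (le_max_left _ _) hw0.le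
  have hround : round ((1:ℝ)/2 - 0) = 1 := by norm_num [round_eq]
  have hhalf : distT (1/2 : ℝ) 0 = 1/2 := by
    simp only [distT, nint, hround]; norm_num
  have hwhalf : 0 < w (1/2 : ℝ) := by
    have := hw.1 (Set.mem_Ici.2 le_rfl) (Set.mem_Ici.2 (by norm_num : (0:ℝ) ≤ 1/2))
      (by norm_num : (0:ℝ) < 1/2)
    rwa [hw.2.2.2.1] at this
  have hmem : |φ (1/2) - φ 0| / w (distT (1/2 : ℝ) 0) ∈ S := ⟨1/2, 0, by
    rw [hhalf]; exact ne_of_gt hwhalf, rfl⟩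
  set Λ : ℝ := sSup S with hΛdef
  have hΛ0 : 0 ≤ Λ := by
    refine le_trans ?_ (le_csSup hbdd hmem)
    rw [hhalf]; positivity
  have hΛ : ∀ x y : ℝ, |φ x - φ y| ≤ Λ * w (distT x y) := by
    intro x y
    by_cases hne : w (distT x y) = 0
    · have hd : distT x y = 0 := by
        by_contra hd
        have hdpos : 0 < distT x y := lt_of_le_of_ne (distT_nonneg x y) (Ne.symm hd)
        have := hw.1 (Set.mem_Ici.2 le_rfl) (Set.mem_Ici.2 hdpos.le) hdpos
        rw [hw.2.2.2.1] at this
        exact (ne_of_gt this) hne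
      have hxy : x = y + (round (x - y) : ℤ) := by
        have h1 : |x - y - round (x-y)| = 0 := hd
        have h2 := abs_eq_zero.1 h1
        linarith
      have hfeq : φ x = φ y := by rw [hxy]; exact per_int hper _ _
      rw [hfeq, sub_self, abs_zero, hne, mul_zero]
    · have hw0 : 0 < w (distT x y) := lt_of_le_of_ne (hw.nonneg (distT_nonneg x y)) (Ne.symm hne)
      have hmem2 : |φ x - φ y| / w (distT x y) ∈ S := ⟨x, y, hne, rfl⟩
      exact (div_le_iff₀ hw0).1 (le_csSup hbdd hmem2)
  -- sup norm nonneg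
  have hsup0 : 0 ≤ supNorm φ := by
    have hSN0 : |φ 0| ∈ {r : ℝ | ∃ x : ℝ, r = |φ x|} := ⟨0, rfl⟩
    have hSNb : BddAbove {r : ℝ | ∃ x : ℝ, r = |φ x|} := by
      refine ⟨|φ 0| + Λ * w (1/2), ?_⟩
      rintro r ⟨z, rfl⟩
      have h1 : |φ z - φ 0| ≤ Λ * w (distT z 0) := hΛ z 0
      have h2 : w (distT z 0) ≤ w (1/2) := hw.mono (distT_nonneg z 0) (distT_le_half z 0)
      have h3 : Λ * w (distT z 0) ≤ Λ * w (1/2) := mul_le_mul_of_nonneg_left h2 hΛ0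
      calc |φ z| ≤ |φ 0| + |φ z - φ 0| := by
            have := abs_sub_abs_le_abs_sub (φ z) (φ 0); linarith [abs_sub_comm (φ z) (φ 0)]
        _ ≤ |φ 0| + Λ * w (1/2) := by linarith
    exact le_trans (abs_nonneg _) (le_csSup hSNb hSN0)
  have hΛW : Λ ≤ wNorm w φ := by
    rw [wNorm, ← hS, ← hΛdef]; linarith
  have hW0 : 0 ≤ wNorm w φ := by rw [wNorm, ← hS, ← hΛdef]; linarith
  have hcont : Continuous φ := phi_cont hw hΛ0 hΛ
  -- γ is small
  have hdc1 := hdc 1 one_ne_zero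
  simp only [Int.cast_one, abs_one, one_mul] at hdc1
  have hlog2lt : Real.log 2 < 0.6931471808 := Real.log_two_lt_d9
  have hlog2gt : (0.6931471803:ℝ) < Real.log 2 := Real.log_two_gt_d9
  have hγ4 : γ ≤ 1/4 := by
    have h1 : (1:ℝ) + 1 = 2 := by norm_num
    rw [h1] at hdc1
    have h2 : nint ω ≤ 1/2 := nint_le_half ω
    have h3 : γ / Real.log 2 ^ 2 ≤ 1/2 := le_trans hdc1 h2
    have h4 : 0 < Real.log 2 ^ 2 := by positivity
    rw [div_le_iff₀ h4] at h3
    nlinarith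
  have hγinv : (4:ℝ) ≤ 1/γ := by rw [le_div_iff₀ hγ]; linarith
  have hlog1γ : 1 ≤ Real.log (1/γ) := by
    rw [Real.le_log_iff_exp_le (by positivity)]
    calc Real.exp 1 ≤ 2.7182818286 := (Real.exp_one_lt_d9).le
      _ ≤ 4 := by norm_num
      _ ≤ 1/γ := hγinv
  -- numbers
  have hN0 : (0:ℝ) < N := by exact_mod_cast (by omega : 0 < N)
  have hN2 : (2:ℝ) ≤ N := by exact_mod_cast hN
  have hlogN : 0 < Real.log N := Real.log_pos (by linarith)
  have hL2N : Real.log 2 ≤ Real.log N := Real.log_le_log (by norm_num) hN2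
  set T : ℝ := Real.log N ^ 4 / N with hT
  have hT0 : 0 < T := by rw [hT]; positivity
  have hwT : 0 ≤ w T := hw.nonneg hT0.le
  set D : ℝ := Real.log ((N:ℝ)+1) ^ 2 / (γ * T) with hD
  have hD0 : 0 ≤ D := by rw [hD]; positivity
  set L : ℝ := (Nat.log 2 N : ℝ) with hL
  have hL0 : 0 ≤ L := by rw [hL]; positivity
  -- bound on D (L+1) + 2 N
  have ha : Real.log ((N:ℝ)+1) ≤ 2 * Real.log N := by
    have h1 : ((N:ℝ)+1) ≤ (N:ℝ)^2 := by nlinarith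
    calc Real.log ((N:ℝ)+1) ≤ Real.log ((N:ℝ)^2) := Real.log_le_log (by positivity) h1
      _ = 2 * Real.log N := by rw [Real.log_pow]; push_cast; ring
  have hapos : 0 ≤ Real.log ((N:ℝ)+1) := Real.log_nonneg (by linarith)
  have hb : L * Real.log 2 ≤ Real.log N := by
    have h1 : (2:ℕ)^(Nat.log 2 N) ≤ N := Nat.pow_log_le_self 2 (by omega)
    have h2 : ((2:ℝ))^(Nat.log 2 N) ≤ (N:ℝ) := by exact_mod_cast h1
    calc L * Real.log 2 = Real.log (2^(Nat.log 2 N)) := by rw [Real.log_pow]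
      _ ≤ Real.log N := Real.log_le_log (by positivity) h2
  have hlog2pos : (0:ℝ) < Real.log 2 := by linarith
  have hL1 : L + 1 ≤ 2 * Real.log N / Real.log 2 := by
    rw [le_div_iff₀ hlog2pos]
    nlinarith
  have hDle : D ≤ 4 * Real.log N ^ 2 * N / (γ * Real.log N ^ 4) := by
    have hDval : D = Real.log ((N:ℝ)+1)^2 * N / (γ * Real.log N ^ 4) := by
      rw [hD, hT]; field_simp
    have hsq : Real.log ((N:ℝ)+1)^2 ≤ 4 * Real.log N ^ 2 := by nlinarith
    rw [hDval, div_le_div_iff₀ (by positivity) (by positivity)]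
    nlinarith [mul_nonneg (mul_nonneg (sub_nonneg.2 hsq) hN0.le)
      (by positivity : (0:ℝ) ≤ γ * Real.log N ^ 4)]
  have hDL : D * (L + 1) + 2 * (N:ℝ) ≤ 18 * N / γ := by
    have hstep1 : D * (L + 1) ≤ (4 * Real.log N ^ 2 * N / (γ * Real.log N ^ 4))
        * (2 * Real.log N / Real.log 2) :=
      mul_le_mul hDle hL1 (by linarith) (by positivity)
    have hsimp : (4 * Real.log N ^ 2 * N / (γ * Real.log N ^ 4))
        * (2 * Real.log N / Real.log 2) = 8 * N / (γ * Real.log 2 * Real.log N) := by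
      field_simp; ring
    have hstep2 : 8 * (N:ℝ) / (γ * Real.log 2 * Real.log N)
        ≤ 8 * N / (γ * Real.log 2 * Real.log 2) := by
      apply div_le_div_of_nonneg_left (by positivity) (by positivity)
      nlinarith [mul_le_mul_of_nonneg_left hL2N (by positivity : (0:ℝ) ≤ γ * Real.log 2)]
    have hstep3 : 8 * (N:ℝ) / (γ * Real.log 2 * Real.log 2) ≤ 17 * N / γ := by
      rw [div_le_div_iff₀ (by positivity) (by positivity)]
      nlinarith [mul_nonneg (mul_pos hγ hN0).le
        (show (0:ℝ) ≤ 17 * Real.log 2 ^ 2 - 8 by nlinarith [hlog2gt])]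
    have hstep4 : 2 * (N:ℝ) ≤ N / γ := by
      rw [le_div_iff₀ hγ]; nlinarith
    have := hstep1.trans (le_of_eq hsimp) |>.trans hstep2 |>.trans hstep3
    have h18 : 17 * (N:ℝ) / γ + N / γ = 18 * N / γ := by field_simp; ring
    linarith
  -- apply the inductive bound
  have hind := induct hw hper hΛ0 hΛ hcont hγ hdc hN N le_rfl x
  rw [← hT, ← hD, ← hL] at hind
  -- finish
  set I : ℝ := ∫ t in (0:ℝ)..1, φ t with hI
  have hrw : (1 / (N : ℝ)) * birkhoff φ ω N x - I = (1/(N:ℝ)) * (birkhoff φ ω N x - N * I) := by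
    field_simp
  rw [hrw, abs_mul, abs_of_pos (by positivity : (0:ℝ) < 1/(N:ℝ))]
  have hchain : |birkhoff φ ω N x - N * I| ≤ 2 * Λ * (18 * N / γ) * w T := by
    calc |birkhoff φ ω N x - N * I| ≤ 2 * Λ * (D * (L + 1) + 2 * N) * w T := hind
      _ ≤ 2 * Λ * (18 * N / γ) * w T := by
          apply mul_le_mul_of_nonneg_right _ hwT
          exact mul_le_mul_of_nonneg_left hDL (by linarith)
  have hfin : (1/(N:ℝ)) * (2 * Λ * (18 * N / γ) * w T) = 36 * (1/γ) * Λ * w T := by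
    field_simp; ring
  have hlast : 36 * (1/γ) * Λ * w T ≤ 40 * (1/γ) * Real.log (1/γ) * wNorm w φ * w T := by
    have hA : Λ * ((1/γ) * w T) ≤ wNorm w φ * ((1/γ) * w T) :=
      mul_le_mul_of_nonneg_right hΛW (by positivity)
    have hB : wNorm w φ * ((1/γ) * w T) * 1 ≤ wNorm w φ * ((1/γ) * w T) * Real.log (1/γ) :=
      mul_le_mul_of_nonneg_left hlog1γ (mul_nonneg hW0 (by positivity))
    nlinarith [hA, hB, mul_nonneg hW0 (mul_nonneg (by positivity : (0:ℝ) ≤ (1/γ) * w T) (by linarith : (0:ℝ) ≤ Real.log (1/γ)))]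
  calc (1/(N:ℝ)) * |birkhoff φ ω N x - N * I|
      ≤ (1/(N:ℝ)) * (2 * Λ * (18 * N / γ) * w T) :=
        mul_le_mul_of_nonneg_left hchain (by positivity)
    _ = 36 * (1/γ) * Λ * w T := hfin
    _ ≤ 40 * (1/γ) * Real.log (1/γ) * wNorm w φ * w T := hlast
end
end

section
/- Let ω ∈ (0,1) be irrational with convergent denominators {q_n}_{n≥1}. Then there is an absolute constant C such that for all integers 1 ≤ k < m, the averaged exponential sum satisfies |𝓔_{q_m}(q_k ω)| ≤ C · (q_k · q_{k+1}) / (q_m · q_{m+1}), where 𝓔_N(t) = (1/N) Σ_{j=0}^{N−1} e^{2πi j t}. -/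
open scoped BigOperators

noncomputable section

/-- The averaged exponential sum `𝓔_N(t) = (1/N) Σ_{j<N} e^{2πijt}`. -/
def expSumAvg (N : ℕ) (t : ℝ) : ℂ :=
  (1 / (N : ℂ)) * ∑ j ∈ Finset.range N, Complex.exp (2 * (Real.pi : ℂ) * Complex.I * (j : ℂ) * (t : ℂ))

namespace Stmt15Aux

open GenContFract

variable {ω : ℝ}

lemma gauss_aux (hirr : Irrational ω) :
    ∀ n, Irrational (gaussIter ω n) ∧ 0 < gaussIter ω n ∧ gaussIter ω n < 1 := by
  intro n
  induction n with
  | zero =>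
    have h0 : gaussIter ω 0 = Int.fract ω := rfl
    have h1 : Irrational (Int.fract ω) := by
      rw [Int.fract]; exact hirr.sub_intCast _
    rw [h0]
    exact ⟨h1, lt_of_le_of_ne (Int.fract_nonneg ω) (Ne.symm h1.ne_zero), Int.fract_lt_one ω⟩
  | succ n ih =>
    have h0 : gaussIter ω (n + 1) = Int.fract (1 / gaussIter ω n) := rfl
    have hinv : Irrational (1 / gaussIter ω n) := by
      rw [one_div]; exact ih.1.inv
    have h1 : Irrational (Int.fract (1 / gaussIter ω n)) := by
      rw [Int.fract]; exact hinv.sub_intCast _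
    rw [h0]
    exact ⟨h1, lt_of_le_of_ne (Int.fract_nonneg _) (Ne.symm h1.ne_zero), Int.fract_lt_one _⟩

lemma stream_eq (hirr : Irrational ω) :
    ∀ n, ∃ b : ℤ, IntFractPair.stream ω n = some ⟨b, gaussIter ω n⟩ := by
  intro n
  induction n with
  | zero => exact ⟨⌊ω⌋, rfl⟩
  | succ n ih =>
    obtain ⟨b, hb⟩ := ih
    refine ⟨⌊(gaussIter ω n)⁻¹⌋, ?_⟩
    rw [IntFractPair.stream, hb]
    have hne : gaussIter ω n ≠ 0 := (gauss_aux hirr n).2.1.ne'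
    simp only [Option.bind_some, hne, if_false]
    have : gaussIter ω (n + 1) = Int.fract (1 / gaussIter ω n) := rfl
    rw [this, one_div]
    rfl

lemma stream_succ_eq (hirr : Irrational ω) (n : ℕ) :
    IntFractPair.stream ω (n + 1) = some ⟨⌊1 / gaussIter ω n⌋, gaussIter ω (n + 1)⟩ := by
  obtain ⟨b, hb⟩ := stream_eq hirr n
  rw [IntFractPair.stream, hb]
  have hne : gaussIter ω n ≠ 0 := (gauss_aux hirr n).2.1.ne'
  simp only [Option.bind_some, hne, if_false]
  have : gaussIter ω (n + 1) = Int.fract (1 / gaussIter ω n) := rfl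
  rw [this, one_div]
  rfl

lemma one_le_inv_gauss (hirr : Irrational ω) (n : ℕ) : 1 < 1 / gaussIter ω n := by
  obtain ⟨-, h0, h1⟩ := gauss_aux hirr n
  exact one_lt_one_div h0 h1

lemma cfa_cast (hirr : Irrational ω) (n : ℕ) : (cfa ω n : ℤ) = ⌊1 / gaussIter ω n⌋ := by
  have h : (1 : ℤ) ≤ ⌊1 / gaussIter ω n⌋ :=
    Int.le_floor.mpr (by exact_mod_cast (one_le_inv_gauss hirr n).le)
  rw [cfa]; omega

lemma cfa_pos (hirr : Irrational ω) (n : ℕ) : 1 ≤ cfa ω n := by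
  have h : (1 : ℤ) ≤ ⌊1 / gaussIter ω n⌋ :=
    Int.le_floor.mpr (by exact_mod_cast (one_le_inv_gauss hirr n).le)
  have := cfa_cast hirr n
  omega

lemma sget (hirr : Irrational ω) (n : ℕ) :
    (GenContFract.of ω).s.get? n = some ⟨1, (cfa ω n : ℝ)⟩ := by
  have h := get?_of_eq_some_of_succ_get?_intFractPair_stream (stream_succ_eq hirr n)
  rw [h]
  congr 1
  have : ((cfa ω n : ℤ) : ℝ) = ((⌊1 / gaussIter ω n⌋ : ℤ) : ℝ) := by
    rw [cfa_cast hirr n]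
  push_cast at this ⊢
  simp [this]

lemma not_term (hirr : Irrational ω) (n : ℕ) : ¬(GenContFract.of ω).TerminatedAt n := by
  rw [of_terminatedAt_n_iff_succ_nth_intFractPair_stream_eq_none, stream_succ_eq hirr n]
  simp

def pnum (ω : ℝ) : ℕ → ℤ
  | 0 => 0
  | 1 => 1
  | n + 2 => cfa ω (n + 1) * pnum ω (n + 1) + pnum ω n

lemma den_eq (hirr : Irrational ω) (n : ℕ) :
    (GenContFract.of ω).dens n = (qden ω n : ℝ) := by
  have key : ∀ n, (GenContFract.of ω).dens n = (qden ω n : ℝ) ∧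
      (GenContFract.of ω).dens (n + 1) = (qden ω (n + 1) : ℝ) := by
    intro n
    induction n with
    | zero =>
      constructor
      · rw [zeroth_den_eq_one]; simp [qden]
      · rw [first_den_eq (sget hirr 0)]; simp [qden]
    | succ n ih =>
      refine ⟨ih.2, ?_⟩
      rw [dens_recurrence (sget hirr (n + 1)) ih.1 ih.2]
      show _ = (qden ω (n + 2) : ℝ)
      rw [qden]
      push_cast
      ring
  exact (key n).1

lemma num_eq (hω : ω ∈ Set.Ioo (0:ℝ) 1) (hirr : Irrational ω) (n : ℕ) :
    (GenContFract.of ω).nums n = (pnum ω n : ℝ) := by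
  have hfloor : ⌊ω⌋ = 0 := Int.floor_eq_zero_iff.mpr ⟨hω.1.le, hω.2⟩
  have hh : (GenContFract.of ω).h = (0 : ℝ) := by
    rw [of_h_eq_floor, hfloor]; simp
  have key : ∀ n, (GenContFract.of ω).nums n = (pnum ω n : ℝ) ∧
      (GenContFract.of ω).nums (n + 1) = (pnum ω (n + 1) : ℝ) := by
    intro n
    induction n with
    | zero =>
      constructor
      · rw [zeroth_num_eq_h, hh]; simp [pnum]
      · rw [first_num_eq (sget hirr 0), hh]; simp [pnum]
    | succ n ih =>
      refine ⟨ih.2, ?_⟩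
      rw [nums_recurrence (sget hirr (n + 1)) ih.1 ih.2]
      show _ = (pnum ω (n + 2) : ℝ)
      rw [pnum]
      push_cast
      ring
  exact (key n).1

lemma qden_pos (hirr : Irrational ω) : ∀ n, 1 ≤ qden ω n
  | 0 => le_refl _
  | 1 => cfa_pos hirr 0
  | (n + 2) => by
      have h1 := qden_pos hirr (n + 1)
      have h2 := cfa_pos hirr (n + 1)
      rw [qden]
      nlinarith

lemma qden_mono (hirr : Irrational ω) : ∀ n, qden ω n ≤ qden ω (n + 1)
  | 0 => by
      show (1 : ℕ) ≤ cfa ω 0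
      exact cfa_pos hirr 0
  | (n + 1) => by
      have h1 := qden_pos hirr n
      have h2 := cfa_pos hirr (n + 1)
      show qden ω (n + 1) ≤ cfa ω (n + 1) * qden ω (n + 1) + qden ω n
      nlinarith

lemma qden_mono' (hirr : Irrational ω) {a b : ℕ} (h : a ≤ b) : qden ω a ≤ qden ω b := by
  induction b with
  | zero => simpa [Nat.le_zero.mp h]
  | succ b ih =>
    rcases Nat.lt_or_ge a (b + 1) with h' | h'
    · exact le_trans (ih (Nat.lt_succ_iff.mp h')) (qden_mono hirr b)
    · have : a = b + 1 := le_antisymm h h'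
      simp [this]

lemma qden_two_le (hirr : Irrational ω) (n : ℕ) : 2 * qden ω n ≤ qden ω (n + 2) := by
  have h1 := qden_mono hirr n
  have h2 := cfa_pos hirr (n + 1)
  have h3 := qden_pos hirr n
  show 2 * qden ω n ≤ cfa ω (n + 1) * qden ω (n + 1) + qden ω n
  nlinarith

lemma theta_abs_le (hω : ω ∈ Set.Ioo (0:ℝ) 1) (hirr : Irrational ω) (n : ℕ) :
    |(qden ω n : ℝ) * ω - (pnum ω n : ℝ)| ≤ 1 / (qden ω (n + 1) : ℝ) := by
  have hQ : (0:ℝ) < (qden ω n : ℝ) := by exact_mod_cast qden_pos hirr n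
  have hQ1 : (0:ℝ) < (qden ω (n + 1) : ℝ) := by exact_mod_cast qden_pos hirr (n + 1)
  have h := abs_sub_convs_le (v := ω) (not_term hirr n)
  rw [conv_eq_num_div_den, num_eq hω hirr n, den_eq hirr n, den_eq hirr (n + 1)] at h
  calc |(qden ω n : ℝ) * ω - (pnum ω n : ℝ)|
      = (qden ω n : ℝ) * |ω - (pnum ω n : ℝ) / (qden ω n : ℝ)| := by
        rw [← abs_of_pos hQ, ← abs_mul]
        congr 1
        field_simp
        rw [abs_of_pos hQ]; ring
    _ ≤ (qden ω n : ℝ) * (1 / ((qden ω n : ℝ) * (qden ω (n + 1) : ℝ))) :=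
        mul_le_mul_of_nonneg_left h hQ.le
    _ = 1 / (qden ω (n + 1) : ℝ) := by field_simp

lemma det_eq (hω : ω ∈ Set.Ioo (0:ℝ) 1) (hirr : Irrational ω) (n : ℕ) :
    (pnum ω n : ℝ) * (qden ω (n + 1) : ℝ) - (qden ω n : ℝ) * (pnum ω (n + 1) : ℝ)
      = (-1 : ℝ) ^ (n + 1) := by
  let s : SimpContFract ℝ := ⟨GenContFract.of ω, GenContFract.of_isSimpContFract ω⟩
  have hc : (↑s : GenContFract ℝ) = GenContFract.of ω := rfl
  have h := SimpContFract.determinant (s := s) (n := n) (by rw [hc]; exact not_term hirr n)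
  rw [hc, num_eq hω hirr n, num_eq hω hirr (n + 1), den_eq hirr n, den_eq hirr (n + 1)] at h
  exact h

lemma theta_abs_lb (hω : ω ∈ Set.Ioo (0:ℝ) 1) (hirr : Irrational ω) (n : ℕ) :
    1 / (2 * (qden ω (n + 1) : ℝ)) ≤ |(qden ω n : ℝ) * ω - (pnum ω n : ℝ)| := by
  have hQ : (0:ℝ) < (qden ω n : ℝ) := by exact_mod_cast qden_pos hirr n
  have hQ1 : (0:ℝ) < (qden ω (n + 1) : ℝ) := by exact_mod_cast qden_pos hirr (n + 1)
  have hQ2 : (0:ℝ) < (qden ω (n + 2) : ℝ) := by exact_mod_cast qden_pos hirr (n + 2)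
  have h2le : (2:ℝ) * (qden ω n : ℝ) ≤ (qden ω (n + 2) : ℝ) := by
    exact_mod_cast qden_two_le hirr n
  set θ0 := (qden ω n : ℝ) * ω - (pnum ω n : ℝ) with hθ0
  set θ1 := (qden ω (n + 1) : ℝ) * ω - (pnum ω (n + 1) : ℝ) with hθ1
  have hdet := det_eq hω hirr n
  have hone : (1:ℝ) = |(qden ω (n + 1) : ℝ) * θ0 - (qden ω n : ℝ) * θ1| := by
    have : (qden ω (n + 1) : ℝ) * θ0 - (qden ω n : ℝ) * θ1
        = -((pnum ω n : ℝ) * (qden ω (n + 1) : ℝ) - (qden ω n : ℝ) * (pnum ω (n + 1) : ℝ)) := by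
      rw [hθ0, hθ1]; ring
    rw [this, hdet, abs_neg, abs_pow, abs_neg, abs_one, one_pow]
  have htri : (1:ℝ) ≤ (qden ω (n + 1) : ℝ) * |θ0| + (qden ω n : ℝ) * |θ1| := by
    rw [hone]
    calc |(qden ω (n + 1) : ℝ) * θ0 - (qden ω n : ℝ) * θ1|
        ≤ |(qden ω (n + 1) : ℝ) * θ0| + |(qden ω n : ℝ) * θ1| := abs_sub _ _
      _ = (qden ω (n + 1) : ℝ) * |θ0| + (qden ω n : ℝ) * |θ1| := by
          rw [abs_mul, abs_mul, abs_of_pos hQ1, abs_of_pos hQ]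
  have hsmall : (qden ω n : ℝ) * |θ1| ≤ 1 / 2 := by
    have h1 := theta_abs_le hω hirr (n + 1)
    calc (qden ω n : ℝ) * |θ1| ≤ (qden ω n : ℝ) * (1 / (qden ω (n + 2) : ℝ)) :=
          mul_le_mul_of_nonneg_left h1 hQ.le
      _ ≤ 1 / 2 := by
          rw [mul_one_div, div_le_div_iff₀ hQ2 two_pos]
          linarith
  have hmain : 1 / 2 ≤ (qden ω (n + 1) : ℝ) * |θ0| := by linarith
  rw [div_le_iff₀ (by positivity)]
  nlinarith

lemma abs_exp_two_pi (t : ℝ) :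
    ‖Complex.exp (2 * (Real.pi : ℂ) * Complex.I * (t : ℂ)) - 1‖
      = 2 * |Real.sin (Real.pi * t)| := by
  have harg : (2 * (Real.pi : ℂ) * Complex.I * (t : ℂ))
      = ((2 * Real.pi * t : ℝ) : ℂ) * Complex.I := by push_cast; ring
  rw [harg, Complex.exp_mul_I, ← Complex.ofReal_cos, ← Complex.ofReal_sin]
  have hre : (Real.cos (2 * Real.pi * t) : ℂ) + (Real.sin (2 * Real.pi * t) : ℂ) * Complex.I - 1
      = ((Real.cos (2 * Real.pi * t) - 1 : ℝ) : ℂ)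
        + ((Real.sin (2 * Real.pi * t) : ℝ) : ℂ) * Complex.I := by push_cast; ring
  rw [hre, Complex.norm_add_mul_I]
  have h1 : Real.sin (Real.pi * t) ^ 2 = 1 / 2 - Real.cos (2 * (Real.pi * t)) / 2 :=
    Real.sin_sq_eq_half_sub _
  have h3 : (2 : ℝ) * (Real.pi * t) = 2 * Real.pi * t := by ring
  rw [h3] at h1
  have h2 := Real.sin_sq_add_cos_sq (2 * Real.pi * t)
  have hsq : (Real.cos (2 * Real.pi * t) - 1) ^ 2 + Real.sin (2 * Real.pi * t) ^ 2
      = (2 * |Real.sin (Real.pi * t)|) ^ 2 := by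
    have : (2 * |Real.sin (Real.pi * t)|) ^ 2 = 4 * Real.sin (Real.pi * t) ^ 2 := by
      rw [mul_pow, sq_abs]; ring
    rw [this]
    nlinarith [h1, h2]
  rw [hsq, Real.sqrt_sq (by positivity)]

lemma neg_one_zpow_abs (a : ℤ) : |((-1 : ℝ)) ^ a| = 1 := by
  rcases Int.even_or_odd a with he | ho
  · rw [(Even.neg_one_zpow he : ((-1:ℝ))^a = 1), abs_one]
  · rw [(Odd.neg_one_zpow ho : ((-1:ℝ))^a = -1), abs_neg, abs_one]

lemma sin_pi_int_add_le (a : ℤ) (x : ℝ) : |Real.sin (Real.pi * (a + x))| ≤ Real.pi * |x| := by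
  have h : Real.pi * (a + x) = Real.pi * x + a * Real.pi := by ring
  rw [h, Real.sin_add_int_mul_pi, abs_mul, neg_one_zpow_abs, one_mul]
  calc |Real.sin (Real.pi * x)| ≤ |Real.pi * x| := Real.abs_sin_le_abs
    _ = Real.pi * |x| := by rw [abs_mul, abs_of_pos Real.pi_pos]

lemma two_mul_le_abs_sin {x : ℝ} (h0 : 0 ≤ x) (h1 : x ≤ 1 / 2) :
    2 * x ≤ |Real.sin (Real.pi * x)| := by
  have hπ := Real.pi_pos
  have hle : Real.pi * x ≤ Real.pi / 2 := by nlinarith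
  have hs : 2 / Real.pi * (Real.pi * x) ≤ Real.sin (Real.pi * x) :=
    Real.mul_le_sin (by positivity) hle
  have heq : 2 / Real.pi * (Real.pi * x) = 2 * x := by field_simp
  calc 2 * x ≤ Real.sin (Real.pi * x) := by linarith [heq ▸ hs]
    _ ≤ |Real.sin (Real.pi * x)| := le_abs_self _

lemma sin_pi_int_add_ge (a : ℤ) (x : ℝ) (hx : |x| ≤ 1 / 2) :
    2 * |x| ≤ |Real.sin (Real.pi * (a + x))| := by
  have h : Real.pi * (a + x) = Real.pi * x + a * Real.pi := by ring
  rw [h, Real.sin_add_int_mul_pi, abs_mul, neg_one_zpow_abs, one_mul]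
  rcases le_or_gt 0 x with hx0 | hx0
  · rw [abs_of_nonneg hx0] at hx ⊢
    exact two_mul_le_abs_sin hx0 hx
  · rw [abs_of_neg hx0] at hx ⊢
    have := two_mul_le_abs_sin (neg_nonneg.mpr hx0.le) hx
    have hneg : Real.sin (Real.pi * x) = -Real.sin (Real.pi * (-x)) := by
      rw [show Real.pi * x = -(Real.pi * (-x)) by ring, Real.sin_neg]
    rw [hneg, abs_neg]
    exact this

end Stmt15Aux

open Stmt15Aux

/-- sharper estimate in the proof of Proposition 2.2: for `1 ≤ k < m`,
`|𝓔_{q_m}(q_k ω)| ≤ C (q_k q_{k+1})/(q_m q_{m+1})` for an absolute constant `C`. -/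
theorem stmt15 :
    ∃ C : ℝ, 0 < C ∧
      ∀ (ω : ℝ), ω ∈ Set.Ioo (0 : ℝ) 1 → Irrational ω →
        ∀ k m : ℕ, 1 ≤ k → k < m →
          ‖expSumAvg (qden ω m) ((qden ω k : ℝ) * ω)‖ ≤
            C * ((qden ω k : ℝ) * (qden ω (k + 1) : ℝ)) /
              ((qden ω m : ℝ) * (qden ω (m + 1) : ℝ)) := by
  refine ⟨Real.pi, Real.pi_pos, ?_⟩
  intro ω hω hirr k m hk hkm
  have hπ := Real.pi_pos
  have hQpos : ∀ n, (0:ℝ) < (qden ω n : ℝ) := fun n => by exact_mod_cast qden_pos hirr n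
  have htirr : Irrational ((qden ω k : ℝ) * ω) :=
    hirr.natCast_mul (Nat.one_le_iff_ne_zero.mp (qden_pos hirr k))
  set t : ℝ := (qden ω k : ℝ) * ω with ht
  set z : ℂ := Complex.exp (2 * (Real.pi : ℂ) * Complex.I * (t : ℂ)) with hz
  have hzne : z ≠ 1 := by
    rw [hz]
    intro h
    rw [Complex.exp_eq_one_iff] at h
    obtain ⟨n, hn⟩ := h
    have h2 : (2 * (Real.pi : ℂ) * Complex.I) ≠ 0 := by
      simp [Complex.I_ne_zero, Real.pi_ne_zero]
    have hcan : (2 * (Real.pi : ℂ) * Complex.I) * (t : ℂ)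
        = (2 * (Real.pi : ℂ) * Complex.I) * (n : ℂ) := by rw [hn]; ring
    have htn : (t : ℂ) = (n : ℂ) := mul_left_cancel₀ h2 hcan
    exact htirr.ne_int n (by exact_mod_cast htn)
  have hsum : ∑ j ∈ Finset.range (qden ω m),
      Complex.exp (2 * (Real.pi : ℂ) * Complex.I * (j : ℂ) * (t : ℂ))
      = (z ^ (qden ω m) - 1) / (z - 1) := by
    rw [← geom_sum_eq hzne]
    refine Finset.sum_congr rfl fun j _ => ?_
    rw [hz, ← Complex.exp_nat_mul]
    congr 1
    push_cast
    ring
  have habs : ‖expSumAvg (qden ω m) t‖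
      = (1 / (qden ω m : ℝ)) * (‖z ^ (qden ω m) - 1‖ / ‖z - 1‖) := by
    rw [expSumAvg, hsum, norm_mul, norm_div, norm_div, norm_one, Complex.norm_natCast]
  have hzN : z ^ (qden ω m)
      = Complex.exp (2 * (Real.pi : ℂ) * Complex.I * ((((qden ω m : ℝ) * t : ℝ)) : ℂ)) := by
    rw [hz, ← Complex.exp_nat_mul]
    congr 1
    push_cast
    ring
  have hnum : ‖z ^ (qden ω m) - 1‖
      = 2 * |Real.sin (Real.pi * ((qden ω m : ℝ) * t))| := by rw [hzN, abs_exp_two_pi]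
  have hden : ‖z - 1‖ = 2 * |Real.sin (Real.pi * t)| := by rw [hz, abs_exp_two_pi]
  -- numerator bound
  have hθm_le := theta_abs_le hω hirr m
  have hrw1 : (qden ω m : ℝ) * t
      = (((qden ω k : ℕ) * pnum ω m : ℤ) : ℝ)
        + (qden ω k : ℝ) * ((qden ω m : ℝ) * ω - (pnum ω m : ℝ)) := by
    rw [ht]; push_cast; ring
  have hnum_le : |Real.sin (Real.pi * ((qden ω m : ℝ) * t))|
      ≤ Real.pi * ((qden ω k : ℝ) / (qden ω (m + 1) : ℝ)) := by
    rw [hrw1]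
    calc |Real.sin (Real.pi * ((((qden ω k : ℕ) * pnum ω m : ℤ) : ℝ)
            + (qden ω k : ℝ) * ((qden ω m : ℝ) * ω - (pnum ω m : ℝ))))|
        ≤ Real.pi * |(qden ω k : ℝ) * ((qden ω m : ℝ) * ω - (pnum ω m : ℝ))| :=
          sin_pi_int_add_le _ _
      _ = Real.pi * ((qden ω k : ℝ) * |(qden ω m : ℝ) * ω - (pnum ω m : ℝ)|) := by
          rw [abs_mul, abs_of_pos (hQpos k)]
      _ ≤ Real.pi * ((qden ω k : ℝ) * (1 / (qden ω (m + 1) : ℝ))) := by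
          have := mul_le_mul_of_nonneg_left hθm_le (hQpos k).le
          nlinarith
      _ = Real.pi * ((qden ω k : ℝ) / (qden ω (m + 1) : ℝ)) := by ring
  -- denominator bound
  have hθk_le := theta_abs_le hω hirr k
  have hθk_lb := theta_abs_lb hω hirr k
  have hq2 : (2 : ℝ) ≤ (qden ω (k + 1) : ℝ) := by
    have h2 : 2 ≤ qden ω 2 := by
      have h1 := cfa_pos hirr 0
      have h2 := cfa_pos hirr 1
      show 2 ≤ cfa ω 1 * qden ω 1 + qden ω 0
      show 2 ≤ cfa ω 1 * cfa ω 0 + 1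
      nlinarith
    have := qden_mono' hirr (show 2 ≤ k + 1 by omega)
    exact_mod_cast le_trans h2 this
  have hθk_half : |(qden ω k : ℝ) * ω - (pnum ω k : ℝ)| ≤ 1 / 2 := by
    refine le_trans hθk_le ?_
    rw [div_le_div_iff₀ (hQpos (k + 1)) two_pos]
    linarith
  have hrw2 : t = ((pnum ω k : ℤ) : ℝ) + ((qden ω k : ℝ) * ω - (pnum ω k : ℝ)) := by
    rw [ht]; push_cast; ring
  have hden_ge : 1 / (qden ω (k + 1) : ℝ) ≤ |Real.sin (Real.pi * t)| := by
    rw [hrw2]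
    have h1 := sin_pi_int_add_ge (pnum ω k) _ hθk_half
    have h2 : 1 / (qden ω (k + 1) : ℝ) ≤ 2 * |(qden ω k : ℝ) * ω - (pnum ω k : ℝ)| := by
      rw [div_le_iff₀ (hQpos (k + 1))]
      have h3 := mul_le_mul_of_nonneg_right hθk_lb
        (show (0:ℝ) ≤ 2 * (qden ω (k + 1) : ℝ) by positivity)
      have h4 : 1 / (2 * (qden ω (k + 1) : ℝ)) * (2 * (qden ω (k + 1) : ℝ)) = 1 := by
        field_simp
      nlinarith [h3, h4]
    linarith
  -- combine
  have hBpos : 0 < ‖z - 1‖ := norm_pos_iff.mpr (sub_ne_zero.mpr hzne)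
  have hkey : ‖z ^ (qden ω m) - 1‖ / ‖z - 1‖
      ≤ (2 * (Real.pi * ((qden ω k : ℝ) / (qden ω (m + 1) : ℝ))))
        / (2 * (1 / (qden ω (k + 1) : ℝ))) := by
    apply div_le_div₀ (by positivity) ?_ (by positivity) ?_
    · rw [hnum]; linarith
    · rw [hden]; linarith
  have hne1 : (qden ω m : ℝ) ≠ 0 := (hQpos m).ne'
  have hne2 : (qden ω (m + 1) : ℝ) ≠ 0 := (hQpos (m + 1)).ne'
  have hne3 : (qden ω (k + 1) : ℝ) ≠ 0 := (hQpos (k + 1)).ne'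
  calc ‖expSumAvg (qden ω m) t‖
      = (1 / (qden ω m : ℝ)) * (‖z ^ (qden ω m) - 1‖ / ‖z - 1‖) := habs
    _ ≤ (1 / (qden ω m : ℝ)) * ((2 * (Real.pi * ((qden ω k : ℝ) / (qden ω (m + 1) : ℝ))))
          / (2 * (1 / (qden ω (k + 1) : ℝ)))) :=
        mul_le_mul_of_nonneg_left hkey (by positivity)
    _ = Real.pi * ((qden ω k : ℝ) * (qden ω (k + 1) : ℝ))
          / ((qden ω m : ℝ) * (qden ω (m + 1) : ℝ)) := by
        field_simp
end
end

section
/- Let ρ : (0,∞) → (0,∞) be any strictly decreasing function with ρ(t) → 0 as t → ∞. Then there exist an irrational frequency ω ∈ (0,1), a real-analytic observable φ : T → ℝ, a constant c > 0, and a sequence of integers N_m → ∞ such that the Birkhoff sums of φ over the translation T_ω satisfy (1/N_m) φ^{(N_m)}(0) − ∫_T φ ≥ c · ρ(N_m) for all m. -/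
open scoped BigOperators

noncomputable section

namespace St18

open Real Complex Finset Filter

lemma nint_nonneg (x : ℝ) : 0 ≤ nint x := abs_nonneg _

lemma nint_le_abs_sub_int (x : ℝ) (n : ℤ) : nint x ≤ |x - n| := by
  rcases le_or_gt (1/2 : ℝ) (|x - n|) with h | h
  · exact (abs_sub_round x).trans h
  · have hn : round x = n := by
      rw [round_eq]
      have h1 := abs_lt.mp h
      have : (n : ℝ) ≤ x + 1/2 := by linarith [h1.1]
      have h2 : x + 1/2 < n + 1 := by linarith [h1.2]
      rw [show ((n:ℤ):ℝ) = (n:ℝ) by norm_num] at *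
      exact_mod_cast Int.floor_eq_iff.mpr ⟨by exact_mod_cast this, by exact_mod_cast h2⟩
    rw [nint, hn]

lemma nint_add_ge (x y : ℝ) : nint x - |y| ≤ nint (x + y) := by
  have h := nint_le_abs_sub_int x (round (x + y))
  have : |x - round (x+y)| ≤ |x + y - round (x+y)| + |y| := by
    have := abs_sub_abs_le_abs_sub (x - round (x+y)) (x + y - round (x+y))
    calc |x - round (x+y)| = |(x + y - round (x+y)) + (-y)| := by ring_nf
      _ ≤ |x + y - round (x+y)| + |(-y)| := abs_add_le _ _
      _ = |x + y - round (x+y)| + |y| := by rw [abs_neg]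
  have h2 : nint (x + y) = |x + y - round (x+y)| := rfl
  linarith

lemma nint_int (n : ℤ) : nint (n : ℝ) = 0 := by
  simp [nint]

lemma nint_rat {q : ℕ} (hq : 0 < q) (a : ℕ) (h : ¬ (q ∣ a)) :
    (1:ℝ)/q ≤ nint ((a : ℝ)/q) := by
  set r := round ((a:ℝ)/q) with hr
  have hne : (a : ℤ) - q * r ≠ 0 := by
    intro hc
    apply h
    have ha : ((q:ℤ)) ∣ (a:ℤ) := ⟨r, by linarith [sub_eq_zero.mp hc]⟩
    exact_mod_cast ha
  have h1 : (1:ℝ) ≤ |(a:ℝ) - q * r| := by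
    have h0 : (1:ℤ) ≤ |(a:ℤ) - q * r| := Int.one_le_abs hne
    have : ((1:ℤ):ℝ) ≤ ((|(a:ℤ) - q*r| : ℤ) : ℝ) := by exact_mod_cast h0
    rw [Int.cast_abs] at this
    push_cast at this
    push_cast
    linarith [this]
  have hq' : (0:ℝ) < q := by exact_mod_cast hq
  have heq : nint ((a:ℝ)/q) = |(a:ℝ) - q*r|/q := by
    rw [nint, ← hr, show (a:ℝ)/q - r = ((a:ℝ) - q*r)/q by field_simp, abs_div,
      abs_of_pos hq']
  rw [heq]
  gcongr


lemma abs_exp_sub_one (θ : ℝ) :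
    ‖Complex.exp ((θ:ℂ) * Complex.I) - 1‖ = 2 * |Real.sin (θ/2)| := by
  have hre : (Complex.exp ((θ:ℂ) * Complex.I) - 1).re = Real.cos θ - 1 := by
    simp [Complex.sub_re, Complex.exp_ofReal_mul_I_re]
  have him : (Complex.exp ((θ:ℂ) * Complex.I) - 1).im = Real.sin θ := by
    simp [Complex.sub_im, Complex.exp_ofReal_mul_I_im]
  rw [Complex.norm_def, Complex.normSq_apply, hre, him, Real.abs_sin_half]
  rw [show (Real.cos θ - 1) * (Real.cos θ - 1) + Real.sin θ * Real.sin θ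
      = 4 * ((1 - Real.cos θ)/2) by nlinarith [Real.sin_sq_add_cos_sq θ]]
  rw [Real.sqrt_mul (by norm_num : (0:ℝ) ≤ 4),
    show Real.sqrt 4 = 2 by
      rw [show (4:ℝ) = 2^2 by norm_num, Real.sqrt_sq (by norm_num : (0:ℝ) ≤ 2)]]

lemma abs_sin_pi_ge (θ : ℝ) : 2 * nint θ ≤ |Real.sin (π * θ)| := by
  set n := round θ with hn
  set t := θ - n with ht
  have hpi := Real.pi_pos
  have h1 : Real.sin (π * θ - n * π) = (-1)^n * Real.sin (π * θ) :=
    Real.sin_sub_int_mul_pi _ _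
  have h2 : |Real.sin (π * t)| = |Real.sin (π * θ)| := by
    rw [show π * t = π * θ - n * π by rw [ht]; ring, h1, abs_mul]
    rw [show |((-1:ℝ)) ^ n| = 1 by
      rcases Int.even_or_odd n with he | ho
      · rw [he.neg_one_zpow]; simp
      · rw [ho.neg_one_zpow]; simp, one_mul]
  have h3 : |t| ≤ 1/2 := abs_sub_round θ
  have h4 : |Real.sin (π * t)| = Real.sin (π * |t|) := by
    rcases abs_cases t with ⟨h, hte⟩ | ⟨h, hte⟩
    · rw [h]
      apply _root_.abs_of_nonneg
      apply Real.sin_nonneg_of_nonneg_of_le_pi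
      · positivity
      · rw [h] at h3; nlinarith
    · rw [h, show π * -t = -(π * t) by ring, Real.sin_neg]
      apply _root_.abs_of_nonpos
      rw [h] at h3
      have hs : 0 ≤ Real.sin (-(π * t)) := by
        rw [show -(π*t) = π * (-t) by ring]
        apply Real.sin_nonneg_of_nonneg_of_le_pi
        · nlinarith
        · nlinarith
      rw [Real.sin_neg] at hs
      linarith
  have h5 : 2 * |t| ≤ Real.sin (π * |t|) := by
    have hms := Real.mul_le_sin (x := π * |t|) (by positivity) (by nlinarith)
    calc 2 * |t| = 2/π * (π * |t|) := by field_simp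
      _ ≤ Real.sin (π * |t|) := hms
  have hnt : nint θ = |t| := rfl
  rw [hnt, ← h2, h4]
  exact h5

lemma cos_ge_half {x : ℝ} (h : |x| ≤ 1/100) : (1/2:ℝ) ≤ Real.cos (2*π*x) := by
  have h1 := Real.one_sub_sq_div_two_le_cos (x := 2*π*x)
  have hpi := Real.pi_pos
  have hpi4 : π ≤ 4 := by nlinarith [Real.pi_lt_d2]
  have hx2 : x^2 ≤ (1/100)^2 := by
    rw [← _root_.sq_abs]
    exact pow_le_pow_left₀ (abs_nonneg x) h 2
  have hpisq : π^2 ≤ 16 := by nlinarith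
  have hsq : (2*π*x)^2 ≤ 64 * (1/100)^2 := by nlinarith [sq_nonneg x]
  nlinarith

lemma dirichlet (θ : ℝ) (hθ : 0 < nint θ) (N : ℕ) :
    |∑ j ∈ Finset.range N, Real.cos (2*π*θ*j)| ≤ 1/(2 * nint θ) := by
  set w := Complex.exp ((2*π*θ : ℝ) * Complex.I) with hw
  have hwj : ∀ j : ℕ, w ^ j = Complex.exp (((2*π*θ*j : ℝ)) * Complex.I) := by
    intro j
    rw [hw, ← Complex.exp_nat_mul]
    congr 1
    push_cast
    ring
  have hsumre : ∑ j ∈ Finset.range N, Real.cos (2*π*θ*j)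
      = (∑ j ∈ Finset.range N, w ^ j).re := by
    rw [Complex.re_sum]
    congr 1
    ext j
    rw [hwj j, Complex.exp_ofReal_mul_I_re]
  have hw1 : w ≠ 1 := by
    intro h
    rw [hw] at h
    obtain ⟨n, hn⟩ := Complex.exp_eq_one_iff.mp h
    have him : 2*π*θ = (n:ℝ)*(2*π) := by
      have h9 := congrArg Complex.im hn
      simpa using h9
    have hpi := Real.pi_pos
    have hθn : θ = n := by nlinarith
    rw [hθn, nint_int] at hθ
    exact lt_irrefl _ hθ
  have hwne : w - 1 ≠ 0 := sub_ne_zero.mpr hw1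
  have habspos : 0 < ‖w - 1‖ := by
    simpa using (norm_pos_iff.mpr hwne)
  have hgeom := geom_sum_eq hw1 N
  have habsw : ‖w‖ = 1 := by
    rw [hw]; exact Complex.norm_exp_ofReal_mul_I _
  have h6 : ‖∑ j ∈ Finset.range N, w^j‖ ≤ 2 / ‖w - 1‖ := by
    rw [hgeom, norm_div]
    have hnum : ‖w ^ N - 1‖ ≤ 2 := by
      calc ‖w ^ N - 1‖ ≤ ‖w ^ N‖ + ‖(1:ℂ)‖ :=
            norm_sub_le _ _
        _ = 1 + 1 := by rw [norm_pow, habsw, one_pow, norm_one]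
        _ = 2 := by norm_num
    gcongr
  have habsw1 : ‖w - 1‖ = 2 * |Real.sin (π*θ)| := by
    have h7 := abs_exp_sub_one (2*π*θ)
    rw [show (2*π*θ)/2 = π * θ by ring] at h7
    rw [hw, h7]
  have hsin := abs_sin_pi_ge θ
  calc |∑ j ∈ Finset.range N, Real.cos (2*π*θ*j)|
      = |(∑ j ∈ Finset.range N, w ^ j).re| := by rw [hsumre]
    _ ≤ ‖∑ j ∈ Finset.range N, w ^ j‖ := Complex.abs_re_le_norm _
    _ ≤ 2 / ‖w - 1‖ := h6
    _ = 1 / |Real.sin (π * θ)| := by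
        have hsp : 0 < |Real.sin (π * θ)| := lt_of_lt_of_le (by positivity) hsin
        rw [habsw1]
        field_simp
    _ ≤ 1 / (2 * nint θ) := by
        apply one_div_le_one_div_of_le
        · positivity
        · exact hsin


def zf (x : ℝ) : ℂ := (1/2 : ℂ) * Complex.exp (2 * π * Complex.I * x)

def phi0 (x : ℝ) : ℝ := (zf x / (1 - zf x)).re

lemma zf_eq (x : ℝ) : zf x = (1/2 : ℂ) * Complex.exp (((2*π*x : ℝ) : ℂ) * Complex.I) := by
  rw [zf]
  congr 2
  push_cast
  ring

lemma zf_abs (x : ℝ) : ‖zf x‖ = 1/2 := by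
  rw [zf_eq, norm_mul, Complex.norm_exp_ofReal_mul_I]
  norm_num

lemma zf_ne (x : ℝ) : 1 - zf x ≠ 0 := by
  intro h
  have h1 : zf x = 1 := by
    have := sub_eq_zero.mp h
    exact this.symm
  have := zf_abs x
  rw [h1] at this
  simp at this

lemma zf_slit (x : ℝ) : (1 - zf x) ∈ Complex.slitPlane := by
  rw [Complex.mem_slitPlane_iff]
  left
  have hre : (zf x).re ≤ 1/2 := by
    calc (zf x).re ≤ |(zf x).re| := le_abs_self _
      _ ≤ ‖zf x‖ := Complex.abs_re_le_norm _
      _ = 1/2 := zf_abs x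
  simp only [Complex.sub_re, Complex.one_re]
  linarith

lemma zf_periodic : Function.Periodic zf 1 := by
  intro x
  rw [zf, zf]
  congr 1
  rw [show 2 * π * Complex.I * ((x:ℝ) + 1 : ℝ) = 2 * π * Complex.I * x + 2 * π * Complex.I
      by push_cast; ring, Complex.exp_add, Complex.exp_two_pi_mul_I, mul_one]

lemma phi0_periodic : Function.Periodic phi0 1 := by
  intro x
  rw [phi0, phi0, zf_periodic x]

lemma zf_analytic (x : ℝ) : AnalyticAt ℝ zf x := by
  apply AnalyticAt.mul analyticAt_const
  have h1 : AnalyticAt ℝ (fun x : ℝ => ((x : ℝ) : ℂ)) x := Complex.ofRealCLM.analyticAt x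
  have h2 : AnalyticAt ℝ (fun x : ℝ => (2 * π * Complex.I) * ((x:ℝ):ℂ)) x :=
    analyticAt_const.mul h1
  have h3 : AnalyticAt ℝ Complex.exp ((2 * π * Complex.I) * ((x:ℝ):ℂ)) :=
    analyticAt_cexp.restrictScalars
  exact h3.comp (f := fun x : ℝ => (2 * π * Complex.I) * ((x:ℝ):ℂ)) h2

lemma phi0_analytic (x : ℝ) : AnalyticAt ℝ phi0 x := by
  have h1 : AnalyticAt ℝ (fun x => zf x / (1 - zf x)) x :=
    (zf_analytic x).div (analyticAt_const.sub (zf_analytic x)) (zf_ne x)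
  exact (Complex.reCLM.analyticAt _).comp h1

lemma phi0_continuous : Continuous phi0 := by
  have hz : Continuous zf := by
    apply continuous_const.mul
    exact Complex.continuous_exp.comp (continuous_const.mul Complex.continuous_ofReal)
  exact Complex.continuous_re.comp (hz.div (continuous_const.sub hz) zf_ne)

lemma phi0_hasSum (x : ℝ) :
    HasSum (fun k : ℕ => (1/2:ℝ)^(k+1) * Real.cos (2*π*((k:ℝ)+1)*x)) (phi0 x) := by
  have hnorm : ‖zf x‖ < 1 := by
    rw [zf_abs]; norm_num
  have h1 : HasSum (fun k : ℕ => (zf x)^k) (1 - zf x)⁻¹ :=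
    hasSum_geometric_of_norm_lt_one hnorm
  have h2 : HasSum (fun k : ℕ => (zf x)^(k+1)) (zf x * (1 - zf x)⁻¹) := by
    have := h1.mul_left (zf x)
    simpa [pow_succ, mul_comm] using this
  have h3 : HasSum (fun k : ℕ => ((zf x)^(k+1)).re) ((zf x * (1 - zf x)⁻¹).re) :=
    Complex.reCLM.hasSum h2
  have h4 : ∀ k : ℕ, ((zf x)^(k+1)).re = (1/2:ℝ)^(k+1) * Real.cos (2*π*((k:ℝ)+1)*x) := by
    intro k
    rw [zf_eq, mul_pow, ← Complex.exp_nat_mul]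
    rw [show ((k+1 : ℕ) : ℂ) * (((2*π*x : ℝ) : ℂ) * Complex.I)
        = ((2*π*((k:ℝ)+1)*x : ℝ) : ℂ) * Complex.I by push_cast; ring]
    rw [show ((1/2 : ℂ))^(k+1) = (((1/2:ℝ)^(k+1) : ℝ) : ℂ) by push_cast; ring]
    rw [Complex.re_ofReal_mul, Complex.exp_ofReal_mul_I_re]
  rw [phi0, div_eq_mul_inv]
  simp only [h4] at h3
  exact h3

lemma phi0_summable (x : ℝ) :
    Summable (fun k : ℕ => (1/2:ℝ)^(k+1) * Real.cos (2*π*((k:ℝ)+1)*x)) :=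
  (phi0_hasSum x).summable

lemma phi0_tsum (x : ℝ) :
    phi0 x = ∑' k : ℕ, (1/2:ℝ)^(k+1) * Real.cos (2*π*((k:ℝ)+1)*x) :=
  (phi0_hasSum x).tsum_eq.symm

lemma phi0_integral : ∫ t in (0:ℝ)..1, phi0 t = 0 := by
  set G : ℝ → ℝ := fun t => (-(Complex.log (1 - zf t)) / (2*π*Complex.I)).re with hG
  have hpi := Real.pi_pos
  have h2pine : (2*π*Complex.I : ℂ) ≠ 0 := by
    simp [Complex.ext_iff, Real.pi_ne_zero]
  have hderiv : ∀ t : ℝ, HasDerivAt G (phi0 t) t := by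
    intro t
    have h1 : HasDerivAt (fun t : ℝ => ((t : ℝ) : ℂ)) 1 t := by
      simpa using (hasDerivAt_id t).ofReal_comp
    have h2 : HasDerivAt (fun t : ℝ => (2*π*Complex.I) * ((t:ℝ):ℂ)) (2*π*Complex.I) t := by
      simpa using h1.const_mul (2*π*Complex.I)
    have h3 : HasDerivAt (fun t : ℝ => Complex.exp ((2*π*Complex.I) * ((t:ℝ):ℂ)))
        (Complex.exp ((2*π*Complex.I) * ((t:ℝ):ℂ)) * (2*π*Complex.I)) t := h2.cexp
    have h4 : HasDerivAt zf ((2*π*Complex.I) * zf t) t := by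
      have := h3.const_mul (1/2 : ℂ)
      convert this using 1
      · rfl
      · rfl
      rw [zf]
      ring
    have h5 : HasDerivAt (fun t => 1 - zf t) (-((2*π*Complex.I) * zf t)) t :=
      h4.const_sub 1
    have h6 : HasDerivAt (fun t => Complex.log (1 - zf t))
        ((-((2*π*Complex.I) * zf t)) / (1 - zf t)) t :=
      h5.clog_real (zf_slit t)
    have h7 : HasDerivAt (fun t => -(Complex.log (1 - zf t)) / (2*π*Complex.I))
        (zf t / (1 - zf t)) t := by
      have := (h6.neg).div_const (2*π*Complex.I)
      convert this using 1
      · rfl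
      · rfl
      field_simp [zf_ne t]
    have h8 := Complex.reCLM.hasFDerivAt.comp_hasDerivAt t h7
    exact h8
  have hint : IntervalIntegrable phi0 MeasureTheory.volume 0 1 :=
    phi0_continuous.intervalIntegrable _ _
  rw [intervalIntegral.integral_eq_sub_of_hasDerivAt (fun t _ => hderiv t) hint]
  have : zf 1 = zf 0 := by
    have := zf_periodic 0
    simpa using this
  rw [hG]
  simp only [this]
  ring


lemma sum_halves (K : ℕ) : ∑ k ∈ Finset.range K, (1/2:ℝ)^(k+1) ≤ 1 := by
  have h := sum_geometric_two_le K
  calc ∑ k ∈ Finset.range K, (1/2:ℝ)^(k+1)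
      = (1/2) * ∑ k ∈ Finset.range K, (1/2:ℝ)^k := by
        rw [Finset.mul_sum]
        exact Finset.sum_congr rfl fun k _ => by ring
    _ ≤ (1/2) * 2 := by linarith
    _ = 1 := by norm_num

set_option maxHeartbeats 2000000 in
lemma key_estimate (ω : ℝ) (b N pp : ℕ) (τ : ℝ) (hb : 3 ≤ b)
    (hN : 8 * 2^b * 2^(2^b) + 8 ≤ N)
    (hτpos : 0 < τ) (hτub : τ ≤ (1/2:ℝ)^(4*(N + 2^b) + 9))
    (hpodd : ¬ 2 ∣ pp)
    (hω : ω = (pp : ℝ)/((2^b : ℕ) : ℝ) + τ) :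
    (1/2:ℝ)^(2^b)/4 ≤ (1/(N:ℝ)) * birkhoff phi0 ω N 0 := by
  have hpi := Real.pi_pos
  set q : ℕ := 2^b with hqdef
  set K : ℕ := N + q with hKdef
  have hq1 : 1 ≤ q := Nat.one_le_two_pow
  have hq8 : 8 ≤ q := by
    calc 8 = 2^3 := by norm_num
      _ ≤ 2^b := Nat.pow_le_pow_right (by norm_num) hb
  have hbq : b < q := Nat.lt_two_pow_self
  have hN8 : 8 ≤ N := by omega
  have hNpos : 0 < N := by omega
  have hqK : q ≤ K := by omega
  have hNK : N ≤ K := by omega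
  have hbK : b < K := by omega
  have hKle : (K:ℝ) ≤ 2^K := by exact_mod_cast (Nat.lt_two_pow_self (n := K)).le
  have hNle : (N:ℝ) ≤ 2^N := by exact_mod_cast (Nat.lt_two_pow_self (n := N)).le
  have hq0 : ((q:ℕ):ℝ) ≠ 0 := by positivity
  have hqR : ((q:ℕ):ℝ) = 2^b := by rw [hqdef]; push_cast; ring
  have hcanc : ∀ x y : ℕ, (2:ℝ)^x * (1/2)^(x+y) = (1/2)^y := by
    intro x y
    rw [pow_add, ← mul_assoc, ← mul_pow]
    norm_num
  -- the exponential sums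
  set Dsum : ℕ → ℝ :=
    fun n => ∑ j ∈ Finset.range N, Real.cos (2*π*((n:ℕ):ℝ)*((0:ℝ) + (j:ℝ)*ω)) with hD
  -- small quantity bounds
  have hτK : (K:ℝ) * τ ≤ (1/2:ℝ)^(3*K+9) := by
    calc (K:ℝ) * τ ≤ (2:ℝ)^K * (1/2:ℝ)^(4*K+9) := by
          apply mul_le_mul hKle hτub (le_of_lt hτpos) (by positivity)
      _ = (1/2:ℝ)^(3*K+9) := by
          rw [show 4*K+9 = K + (3*K+9) by ring]
          exact hcanc K (3*K+9)
  have hsmall : (K:ℝ) * τ * (N:ℝ) ≤ 1/100 := by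
    have h1 : (K:ℝ) * τ * (N:ℝ) ≤ (1/2:ℝ)^(3*K+9) * 2^N := by
      apply mul_le_mul hτK hNle (by positivity) (by positivity)
    have h2 : (1/2:ℝ)^(3*K+9) * (2:ℝ)^N = (1/2:ℝ)^(3*K+9-N) := by
      have hc := hcanc N (3*K+9-N)
      rw [show N + (3*K+9-N) = 3*K+9 by omega] at hc
      rw [mul_comm]
      exact hc
    have h3 : (1/2:ℝ)^(3*K+9-N) ≤ (1/2:ℝ)^9 :=
      pow_le_pow_of_le_one (by norm_num) (by norm_num) (by omega)
    have h4 : ((1:ℝ)/2)^9 ≤ 1/100 := by norm_num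
    linarith
  -- claim (i): frequencies divisible by q
  have claim1 : ∀ n : ℕ, 1 ≤ n → n ≤ K → q ∣ n → (N:ℝ)/2 ≤ Dsum n := by
    rintro n hn1 hnK ⟨l, hl⟩
    have hstep : ∀ j ∈ Finset.range N, (1/2:ℝ) ≤ Real.cos (2*π*((n:ℕ):ℝ)*((0:ℝ) + (j:ℝ)*ω)) := by
      intro j hj
      have hjN : j < N := Finset.mem_range.mp hj
      have harg : 2*π*((n:ℕ):ℝ)*((0:ℝ) + (j:ℝ)*ω)
          = 2*π*((n:ℝ)*τ*(j:ℝ)) + (((l*pp*j : ℕ):ℤ):ℝ)*(2*π) := by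
        rw [hω, hl]
        push_cast
        field_simp
        ring
      rw [harg, Real.cos_add_int_mul_two_pi]
      apply cos_ge_half
      have hx0 : 0 ≤ (n:ℝ)*τ*(j:ℝ) := by positivity
      have hxle : (n:ℝ)*τ*(j:ℝ) ≤ (K:ℝ)*τ*(N:ℝ) := by
        apply mul_le_mul
        · apply mul_le_mul _ le_rfl (le_of_lt hτpos) (by positivity)
          exact_mod_cast hnK
        · exact_mod_cast hjN.le
        · positivity
        · positivity
      rw [_root_.abs_of_nonneg hx0]
      linarith
    calc (N:ℝ)/2 = ∑ j ∈ Finset.range N, (1/2:ℝ) := by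
          rw [Finset.sum_const, Finset.card_range, nsmul_eq_mul]; ring
      _ ≤ Dsum n := Finset.sum_le_sum hstep
  -- claim (ii): frequencies not divisible by q
  have claim2 : ∀ n : ℕ, 1 ≤ n → n ≤ K → ¬ (q ∣ n) → |Dsum n| ≤ (q:ℝ) := by
    intro n hn1 hnK hndvd
    have hform : Dsum n = ∑ j ∈ Finset.range N, Real.cos (2*π*((n:ℝ)*ω)*(j:ℝ)) := by
      apply Finset.sum_congr rfl
      intro j _
      congr 1
      ring
    have hcop : Nat.Coprime q pp :=
      Nat.Coprime.pow_left b ((Nat.prime_two.coprime_iff_not_dvd).mpr hpodd)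
    have hco : ¬ (q ∣ n * pp) := fun hdvd => hndvd (hcop.dvd_of_dvd_mul_right hdvd)
    have hqpos : 0 < q := by omega
    have h1 : (1:ℝ)/q ≤ nint (((n*pp : ℕ):ℝ)/q) := nint_rat hqpos _ hco
    have heq : (n:ℝ)*ω = ((n*pp : ℕ):ℝ)/q + (n:ℝ)*τ := by
      rw [hω]
      push_cast
      field_simp
    have hnτ : (n:ℝ)*τ ≤ 1/(2*(q:ℝ)) := by
      have h2 : (n:ℝ)*τ ≤ (K:ℝ)*τ := by
        apply mul_le_mul_of_nonneg_right _ (le_of_lt hτpos)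
        exact_mod_cast hnK
      have h3 : (1/2:ℝ)^(3*K+9) ≤ (1/2:ℝ)^(b+1) :=
        pow_le_pow_of_le_one (by norm_num) (by norm_num) (by omega)
      have h4 : (1/2:ℝ)^(b+1) = 1/(2*(q:ℝ)) := by
        rw [hqR, pow_succ, div_pow, one_pow]
        ring
      linarith
    have hnτ0 : 0 ≤ (n:ℝ)*τ := by positivity
    have hqRpos : (0:ℝ) < (q:ℝ) := by exact_mod_cast hqpos
    have hnint : 1/(2*(q:ℝ)) ≤ nint ((n:ℝ)*ω) := by
      have h5 := nint_add_ge (((n*pp : ℕ):ℝ)/q) ((n:ℝ)*τ)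
      rw [← heq] at h5
      rw [_root_.abs_of_nonneg hnτ0] at h5
      have h8 : 1/(q:ℝ) - (n:ℝ)*τ ≤ nint ((n:ℝ)*ω) := by linarith
      have h6 : 1/(q:ℝ) - 1/(2*(q:ℝ)) = 1/(2*(q:ℝ)) := by field_simp; ring
      linarith
    have hnintpos : 0 < nint ((n:ℝ)*ω) := lt_of_lt_of_le (by positivity) hnint
    have h7 := dirichlet ((n:ℝ)*ω) hnintpos N
    rw [hform]
    calc |∑ j ∈ Finset.range N, Real.cos (2*π*((n:ℝ)*ω)*(j:ℝ))| ≤ 1/(2*nint ((n:ℝ)*ω)) := h7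
      _ ≤ 1/(2*(1/(2*(q:ℝ)))) := by
          apply one_div_le_one_div_of_le (by positivity)
          linarith
      _ = (q:ℝ) := by field_simp
  -- the Birkhoff sum as a series over frequencies
  set F : ℕ → ℝ := fun k => (1/2:ℝ)^(k+1) * Dsum (k+1) with hF
  have hDb : ∀ n : ℕ, |Dsum n| ≤ (N:ℝ) := by
    intro n
    calc |Dsum n| ≤ ∑ j ∈ Finset.range N, |Real.cos (2*π*((n:ℕ):ℝ)*((0:ℝ)+(j:ℝ)*ω))| :=
          Finset.abs_sum_le_sum_abs _ _
      _ ≤ ∑ j ∈ Finset.range N, 1 := Finset.sum_le_sum fun j _ => Real.abs_cos_le_one _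
      _ = (N:ℝ) := by simp
  have hFb : ∀ k : ℕ, ‖F k‖ ≤ (N:ℝ) * (1/2:ℝ)^(k+1) := by
    intro k
    rw [hF]
    simp only [Real.norm_eq_abs, abs_mul]
    rw [_root_.abs_of_nonneg (by positivity : (0:ℝ) ≤ (1/2:ℝ)^(k+1))]
    calc (1/2:ℝ)^(k+1) * |Dsum (k+1)| ≤ (1/2:ℝ)^(k+1) * (N:ℝ) :=
          mul_le_mul_of_nonneg_left (hDb _) (by positivity)
      _ = (N:ℝ) * (1/2:ℝ)^(k+1) := by ring
  have hgeo : Summable (fun k : ℕ => (1/2:ℝ)^k) :=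
    summable_geometric_of_lt_one (by norm_num) (by norm_num)
  have hgsum : Summable (fun k : ℕ => (N:ℝ) * (1/2:ℝ)^(k+1)) := by
    apply (hgeo.mul_left ((N:ℝ)*(1/2))).congr
    intro k
    rw [pow_succ]
    ring
  have hFs : Summable F := Summable.of_norm_bounded hgsum hFb
  have hFabs : Summable (fun k => ‖F k‖) :=
    Summable.of_nonneg_of_le (fun k => norm_nonneg _) hFb hgsum
  have hbirk : birkhoff phi0 ω N 0 = ∑' k, F k := by
    rw [birkhoff]
    have h1 : ∀ j ∈ Finset.range N, phi0 ((0:ℝ) + (j:ℝ)*ω)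
        = ∑' k : ℕ, (1/2:ℝ)^(k+1) * Real.cos (2*π*((k:ℝ)+1)*((0:ℝ) + (j:ℝ)*ω)) :=
      fun j _ => phi0_tsum _
    rw [Finset.sum_congr rfl h1]
    have hswap := Summable.tsum_finsetSum (f := fun (j : ℕ) (k : ℕ) =>
        (1/2:ℝ)^(k+1) * Real.cos (2*π*((k:ℝ)+1)*((0:ℝ) + (j:ℝ)*ω)))
      (s := Finset.range N) (fun j _ => phi0_summable ((0:ℝ) + (j:ℝ)*ω))
    rw [← hswap]
    apply tsum_congr
    intro k
    simp only [hF, hD]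
    rw [Finset.mul_sum]
    apply Finset.sum_congr rfl
    intro j _
    push_cast
    ring_nf
  have hsplit := Summable.sum_add_tsum_nat_add K hFs
  have htailb : |∑' k, F (k + K)| ≤ (N:ℝ) * (1/2:ℝ)^K := by
    have h1 : ‖∑' k, F (k + K)‖ ≤ ∑' k, ‖F (k + K)‖ :=
      norm_tsum_le_tsum_norm ((summable_nat_add_iff K).mpr hFabs)
    have hrs : Summable (fun k : ℕ => (N:ℝ) * (1/2:ℝ)^(k + K + 1)) := by
      apply (hgeo.mul_left ((N:ℝ)*(1/2:ℝ)^(K+1))).congr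
      intro k
      rw [show k + K + 1 = (K+1) + k by ring, pow_add]
      ring
    have h2 : ∑' k, ‖F (k + K)‖ ≤ ∑' k : ℕ, (N:ℝ) * (1/2:ℝ)^(k + K + 1) :=
      Summable.tsum_le_tsum (fun k => hFb (k + K)) ((summable_nat_add_iff K).mpr hFabs) hrs
    have h3 : ∑' k : ℕ, (N:ℝ) * (1/2:ℝ)^(k + K + 1) = (N:ℝ) * (1/2:ℝ)^K := by
      have hc : ∀ k : ℕ, (N:ℝ) * (1/2:ℝ)^(k + K + 1)
          = ((N:ℝ) * (1/2:ℝ)^(K+1)) * (1/2:ℝ)^k := by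
        intro k
        rw [show k + K + 1 = (K+1) + k by ring, pow_add]
        ring
      rw [tsum_congr hc, tsum_mul_left,
        tsum_geometric_of_lt_one (by norm_num) (by norm_num), pow_succ]
      norm_num
      ring
    rw [Real.norm_eq_abs] at h1
    linarith
  have hq1K : q - 1 ∈ Finset.range K := Finset.mem_range.mpr (by omega)
  have hhead : (1/2:ℝ)^q * ((N:ℝ)/2) - (q:ℝ) ≤ ∑ k ∈ Finset.range K, F k := by
    rw [← Finset.add_sum_erase _ F hq1K]
    have hq1' : (q - 1) + 1 = q := by omega
    have hFq : (1/2:ℝ)^q * ((N:ℝ)/2) ≤ F (q-1) := by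
      rw [hF]
      show (1/2:ℝ)^q * ((N:ℝ)/2) ≤ (1/2:ℝ)^((q-1)+1) * Dsum ((q-1)+1)
      rw [hq1']
      exact mul_le_mul_of_nonneg_left (claim1 q (by omega) hqK dvd_rfl) (by positivity)
    have hrest : - (q:ℝ) ≤ ∑ k ∈ (Finset.range K).erase (q-1), F k := by
      have hptw : ∀ k ∈ (Finset.range K).erase (q-1), -((1/2:ℝ)^(k+1) * (q:ℝ)) ≤ F k := by
        intro k hk
        obtain ⟨hkne, hkK⟩ := Finset.mem_erase.mp hk
        have hkK' : k < K := Finset.mem_range.mp hkK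
        by_cases hdvd : q ∣ (k+1)
        · have hd := claim1 (k+1) (by omega) (by omega) hdvd
          have hF0 : 0 ≤ F k := by
            rw [hF]
            show 0 ≤ (1/2:ℝ)^(k+1) * Dsum (k+1)
            have hD0 : (0:ℝ) ≤ Dsum (k+1) := le_trans (by positivity) hd
            positivity
          have hneg : -((1/2:ℝ)^(k+1) * (q:ℝ)) ≤ 0 := by
            apply neg_nonpos_of_nonneg
            positivity
          linarith
        · have h2 := claim2 (k+1) (by omega) (by omega) hdvd
          rw [hF]
          show -((1/2:ℝ)^(k+1) * (q:ℝ)) ≤ (1/2:ℝ)^(k+1) * Dsum (k+1)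
          have h3 := neg_abs_le (Dsum (k+1))
          have h4 : (0:ℝ) < (1/2:ℝ)^(k+1) := by positivity
          nlinarith
      have hsub : ∑ k ∈ (Finset.range K).erase (q-1), ((1/2:ℝ)^(k+1) * (q:ℝ))
          ≤ ∑ k ∈ Finset.range K, ((1/2:ℝ)^(k+1) * (q:ℝ)) :=
        Finset.sum_le_sum_of_subset_of_nonneg (Finset.erase_subset _ _)
          (fun _ _ _ => by positivity)
      have hsum1 : ∑ k ∈ Finset.range K, ((1/2:ℝ)^(k+1) * (q:ℝ)) ≤ (q:ℝ) := by
        rw [← Finset.sum_mul]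
        calc (∑ k ∈ Finset.range K, (1/2:ℝ)^(k+1)) * (q:ℝ) ≤ 1 * (q:ℝ) :=
              mul_le_mul_of_nonneg_right (sum_halves K) (by positivity)
          _ = (q:ℝ) := one_mul _
      have hsle := Finset.sum_le_sum hptw
      rw [Finset.sum_neg_distrib] at hsle
      linarith
    linarith
  have hkey : (N:ℝ) * (1/2:ℝ)^q / 4 ≤ birkhoff phi0 ω N 0 := by
    rw [hbirk, ← hsplit]
    have htneg : -((N:ℝ) * (1/2:ℝ)^K) ≤ ∑' k, F (k + K) := neg_le_of_abs_le htailb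
    have hhalf : (0:ℝ) < (1/2:ℝ)^q := by positivity
    have hc1 : (q:ℝ) ≤ (1/2:ℝ)^q * (N:ℝ) / 8 := by
      have hcast : (8:ℝ) * (q:ℝ) * (2:ℝ)^q ≤ (N:ℝ) := by
        have h8 : 8 * q * 2^q ≤ N := by omega
        exact_mod_cast h8
      have hpow : (1/2:ℝ)^q * (2:ℝ)^q = 1 := by rw [← mul_pow]; norm_num
      have hmul := mul_le_mul_of_nonneg_left hcast (le_of_lt hhalf)
      have he : (1/2:ℝ)^q * ((8:ℝ)*(q:ℝ)*(2:ℝ)^q) = 8*(q:ℝ) := by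
        calc (1/2:ℝ)^q * ((8:ℝ)*(q:ℝ)*(2:ℝ)^q) = 8*(q:ℝ)*((1/2:ℝ)^q*(2:ℝ)^q) := by ring
          _ = 8*(q:ℝ) := by rw [hpow]; ring
      linarith
    have hc2 : (N:ℝ) * (1/2:ℝ)^K ≤ (1/2:ℝ)^q * (N:ℝ) / 8 := by
      have hK : (1/2:ℝ)^K = (1/2:ℝ)^N * (1/2:ℝ)^q := by
        rw [← pow_add]
      have h2 : (N:ℝ) * (1/2:ℝ)^N ≤ 1 := by
        have h3 := mul_le_mul_of_nonneg_right hNle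
          (le_of_lt (pow_pos (show (0:ℝ)<1/2 by norm_num) N))
        have h4 : (2:ℝ)^N * (1/2:ℝ)^N = 1 := by rw [← mul_pow]; norm_num
        linarith
      have h5 : (N:ℝ)*(1/2:ℝ)^K ≤ (1/2:ℝ)^q := by
        calc (N:ℝ)*(1/2:ℝ)^K = ((N:ℝ)*(1/2:ℝ)^N)*(1/2:ℝ)^q := by rw [hK]; ring
          _ ≤ 1*(1/2:ℝ)^q := mul_le_mul_of_nonneg_right h2 (by positivity)
          _ = (1/2:ℝ)^q := one_mul _
      have hN8R : (8:ℝ) ≤ (N:ℝ) := by exact_mod_cast hN8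
      nlinarith
    linarith
  have hNR : (0:ℝ) < (N:ℝ) := by exact_mod_cast hNpos
  have hfin := mul_le_mul_of_nonneg_left hkey (le_of_lt (one_div_pos.mpr hNR))
  have he : (1/(N:ℝ))*((N:ℝ)*(1/2:ℝ)^q/4) = (1/2:ℝ)^q/4 := by field_simp
  linarith


end St18

open St18 Real in
/-- Remark 2.5: for any prescribed decay rate `ρ(t) → 0`, there are a
(Liouvillean) irrational frequency `ω` and a real-analytic observable `φ` on the torus whose
Birkhoff averages at `0` along some sequence `N_m → ∞` converge slower than `ρ`. -/
theorem stmt18 (ρ : ℝ → ℝ) (hanti : StrictAntiOn ρ (Set.Ioi 0)) (hpos : ∀ t : ℝ, 0 < t → 0 < ρ t)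
    (hlim : Filter.Tendsto ρ Filter.atTop (nhds 0)) :
    ∃ (ω : ℝ) (φ : ℝ → ℝ) (c : ℝ) (Nm : ℕ → ℕ),
      ω ∈ Set.Ioo (0 : ℝ) 1 ∧ Irrational ω ∧
      (∀ x : ℝ, AnalyticAt ℝ φ x) ∧ Function.Periodic φ 1 ∧ 0 < c ∧
      Filter.Tendsto Nm Filter.atTop Filter.atTop ∧
      ∀ m : ℕ,
        (1 / (Nm m : ℝ)) * birkhoff φ ω (Nm m) 0 - (∫ t in (0:ℝ)..1, φ t) ≥
          c * ρ ((Nm m : ℝ)) := by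
  classical
  have hρseq : Filter.Tendsto (fun n : ℕ => ρ (n:ℝ)) Filter.atTop (nhds 0) :=
    hlim.comp tendsto_natCast_atTop_atTop
  have hThrEx : ∀ q : ℕ, ∃ T : ℕ, ∀ n : ℕ, T ≤ n → ρ (n:ℝ) < (1/2:ℝ)^q / 4 := by
    intro q
    have hδ : (0:ℝ) < (1/2:ℝ)^q/4 := by positivity
    have hev := hρseq.eventually (gt_mem_nhds hδ)
    rw [Filter.eventually_atTop] at hev
    exact hev
  choose Thr hThr using hThrEx
  set NN : ℕ → ℕ → ℕ :=
    fun b n0 => max (n0 + 1) (max (8 * 2^b * 2^(2^b) + 8) (Thr (2^b))) with hNNdef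
  set P : ℕ → ℕ × ℕ := fun m => Nat.rec ((3:ℕ), NN 3 0)
    (fun m ih => ((m+2) * ih.1 + 4*(ih.2 + 2^ih.1) + 10,
      NN ((m+2) * ih.1 + 4*(ih.2 + 2^ih.1) + 10) ih.2)) m with hP
  set B : ℕ → ℕ := fun m => (P m).1 with hB
  set Nm : ℕ → ℕ := fun m => (P m).2 with hNm
  have hB0 : B 0 = 3 := rfl
  have hBs : ∀ m, B (m+1) = (m+2) * B m + 4*(Nm m + 2^(B m)) + 10 := fun m => rfl
  have hNm0 : Nm 0 = NN 3 0 := rfl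
  have hNms : ∀ m, Nm (m+1) = NN (B (m+1)) (Nm m) := fun m => rfl
  have hNNge1 : ∀ b n0, 8 * 2^b * 2^(2^b) + 8 ≤ NN b n0 :=
    fun b n0 => le_trans (le_max_left _ _) (le_max_right _ _)
  have hNNthr : ∀ b n0, Thr (2^b) ≤ NN b n0 :=
    fun b n0 => le_trans (le_max_right _ _) (le_max_right _ _)
  have hNNmono : ∀ b n0, n0 + 1 ≤ NN b n0 := fun b n0 => le_max_left _ _
  have hNge : ∀ m, 8 * 2^(B m) * 2^(2^(B m)) + 8 ≤ Nm m := by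
    intro m
    cases m with
    | zero => rw [hNm0, hB0]; exact hNNge1 3 0
    | succ m => rw [hNms m]; exact hNNge1 _ _
  have hNthr : ∀ m, Thr (2^(B m)) ≤ Nm m := by
    intro m
    cases m with
    | zero => rw [hNm0, hB0]; exact hNNthr 3 0
    | succ m => rw [hNms m]; exact hNNthr _ _
  have hNmono : ∀ m, Nm m < Nm (m+1) := by
    intro m
    rw [hNms m]
    have := hNNmono (B (m+1)) (Nm m)
    omega
  have hBmono : StrictMono B := by
    apply strictMono_nat_of_lt_succ
    intro m
    rw [hBs m]
    have h1 : B m ≤ (m+2) * B m := Nat.le_mul_of_pos_left _ (by omega)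
    omega
  have hBge3 : ∀ m, 3 ≤ B m := by
    intro m
    induction m with
    | zero => rw [hB0]
    | succ m ih =>
      have h9 : B m < B (m+1) := by exact hBmono (Nat.lt_succ_self m)
      omega
  have hBgem : ∀ m, m + 3 ≤ B m := by
    intro m
    induction m with
    | zero => rw [hB0]
    | succ m ih =>
      have h9 : B m < B (m+1) := by exact hBmono (Nat.lt_succ_self m)
      omega
  have hBadd : ∀ a i, B a + i ≤ B (a + i) := by
    intro a i
    induction i with
    | zero => simp
    | succ i ih =>
      have h9 : B (a+i) < B (a+i+1) := by exact hBmono (Nat.lt_succ_self (a+i))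
      have h10 : a + (i+1) = (a+i)+1 := by omega
      rw [h10]
      omega
  set u : ℕ → ℝ := fun m => (1/2:ℝ)^(B m) with hu
  have hu_pos : ∀ m, 0 < u m := fun m => by positivity
  have hu_le : ∀ m, u m ≤ (1/2:ℝ)^(m+3) := fun m =>
    pow_le_pow_of_le_one (by norm_num) (by norm_num) (hBgem m)
  have hgeo : Summable (fun m : ℕ => (1/2:ℝ)^m) :=
    summable_geometric_of_lt_one (by norm_num) (by norm_num)
  have hgeo3 : Summable (fun m : ℕ => (1/2:ℝ)^(m+3)) := by
    apply (hgeo.mul_left ((1/2:ℝ)^3)).congr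
    intro m
    rw [pow_add]
    ring
  have hu_sum : Summable u := Summable.of_nonneg_of_le (fun m => (hu_pos m).le) hu_le hgeo3
  set ω : ℝ := ∑' m, u m with hωdef
  set τ : ℕ → ℝ := fun m => ∑' i : ℕ, u (i + (m+1)) with hτdef
  have hτ_sum : ∀ m, Summable (fun i : ℕ => u (i + (m+1))) :=
    fun m => (summable_nat_add_iff (m+1)).mpr hu_sum
  have hsplit : ∀ m, ∑ i ∈ Finset.range (m+1), u i + τ m = ω :=
    fun m => Summable.sum_add_tsum_nat_add (m+1) hu_sum
  have hτpos : ∀ m, 0 < τ m := by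
    intro m
    exact Summable.tsum_pos (hτ_sum m) (fun i => (hu_pos (i+(m+1))).le) 0 (hu_pos (0+(m+1)))
  have hτle : ∀ m, τ m ≤ 2 * (1/2:ℝ)^(B (m+1)) := by
    intro m
    have hle : ∀ i : ℕ, u (i + (m+1)) ≤ (1/2:ℝ)^(B (m+1)) * (1/2:ℝ)^i := by
      intro i
      rw [hu, ← pow_add]
      apply pow_le_pow_of_le_one (by norm_num) (by norm_num)
      have h1 := hBadd (m+1) i
      have h2 : (m+1) + i = i + (m+1) := by omega
      rw [h2] at h1
      omega
    have hsg : Summable (fun i : ℕ => (1/2:ℝ)^(B (m+1)) * (1/2:ℝ)^i) := hgeo.mul_left _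
    calc τ m ≤ ∑' i : ℕ, (1/2:ℝ)^(B (m+1)) * (1/2:ℝ)^i :=
          Summable.tsum_le_tsum hle (hτ_sum m) hsg
      _ = (1/2:ℝ)^(B (m+1)) * 2 := by
          rw [tsum_mul_left, tsum_geometric_of_lt_one (by norm_num) (by norm_num)]
          norm_num
      _ = 2 * (1/2:ℝ)^(B (m+1)) := by ring
  set pnum : ℕ → ℕ := fun m => ∑ i ∈ Finset.range (m+1), 2^(B m - B i) with hpnum
  have hpart : ∀ m, ((pnum m : ℕ):ℝ) / 2^(B m) = ∑ i ∈ Finset.range (m+1), u i := by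
    intro m
    rw [hpnum]
    push_cast
    rw [Finset.sum_div]
    apply Finset.sum_congr rfl
    intro i hi
    have hle : B i ≤ B m := hBmono.monotone (Nat.lt_succ_iff.mp (Finset.mem_range.mp hi))
    have key : (2:ℝ)^(B m - B i) * (2:ℝ)^(B i) = (2:ℝ)^(B m) := by
      rw [← pow_add, Nat.sub_add_cancel hle]
    have h2 : ((2:ℝ)^(B i)) ≠ 0 := by positivity
    have h3 : ((2:ℝ)^(B m)) ≠ 0 := by positivity
    simp only [hu]
    rw [div_eq_iff h3]
    rw [show (1/2:ℝ)^(B i) = 1/(2:ℝ)^(B i) by rw [div_pow, one_pow]]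
    rw [div_mul_eq_mul_div, one_mul, eq_div_iff h2]
    exact key
  have hτeq : ∀ m, ω - ((pnum m:ℕ):ℝ)/2^(B m) = τ m := by
    intro m
    rw [hpart m]
    linarith [hsplit m]
  have hpodd : ∀ m, ¬ (2 ∣ pnum m) := by
    intro m
    simp only [hpnum]
    rw [Finset.sum_range_succ, Nat.sub_self, pow_zero]
    have heven : 2 ∣ ∑ i ∈ Finset.range m, 2^(B m - B i) := by
      apply Finset.dvd_sum
      intro i hi
      have h1 : B i < B m := hBmono (Finset.mem_range.mp hi)
      exact dvd_pow_self 2 (by omega)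
    omega
  have hLiou : Liouville ω := by
    intro n
    refine ⟨(pnum n : ℤ), (2:ℤ)^(B n), ?_, ?_, ?_⟩
    · have h1 : (2:ℤ)^1 ≤ (2:ℤ)^(B n) :=
        pow_le_pow_right₀ (by norm_num) (by have := hBge3 n; omega)
      norm_num at h1
      omega
    · intro hc
      have h1 : ((pnum n : ℤ):ℝ) / (((2:ℤ)^(B n) : ℤ):ℝ) = ((pnum n:ℕ):ℝ)/2^(B n) := by
        push_cast
        ring
      rw [h1] at hc
      have h2 := hτeq n
      rw [← hc] at h2
      simp at h2
      have := hτpos n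
      linarith
    · have h1 : ((pnum n : ℤ):ℝ) / (((2:ℤ)^(B n) : ℤ):ℝ) = ((pnum n:ℕ):ℝ)/2^(B n) := by
        push_cast
        ring
      rw [h1]
      have h2 : |ω - ((pnum n:ℕ):ℝ)/2^(B n)| = τ n := by
        rw [hτeq n]
        exact _root_.abs_of_pos (hτpos n)
      rw [h2]
      have h3 : n * B n + 2 ≤ B (n+1) := by
        have h4 := hBs n
        have h5 : n * B n ≤ (n+2) * B n := Nat.mul_le_mul_right _ (by omega)
        omega
      have h5 : (1/2:ℝ)^(B (n+1)) ≤ (1/2:ℝ)^(n * B n + 2) :=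
        pow_le_pow_of_le_one (by norm_num) (by norm_num) h3
      have h6 := hτle n
      have h7 : (((2:ℤ)^(B n) : ℤ):ℝ) = (2:ℝ)^(B n) := by push_cast; ring
      rw [h7, ← pow_mul]
      have h8 : (1/2:ℝ)^(n * B n + 2) = (1/2:ℝ)^(n * B n) * (1/4:ℝ) := by
        rw [pow_add]
        norm_num
      have h9 : (1/2:ℝ)^(n * B n) = 1/(2:ℝ)^(n * B n) := by rw [div_pow, one_pow]
      have h10 : (0:ℝ) < (2:ℝ)^(n * B n) := by positivity
      have h11 : (2:ℝ)^(B n * n) = (2:ℝ)^(n * B n) := by rw [Nat.mul_comm]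
      rw [h11]
      calc τ n ≤ 2 * (1/2:ℝ)^(B (n+1)) := h6
        _ ≤ 2 * (1/2:ℝ)^(n * B n + 2) := by linarith
        _ = (1/2) * (1/(2:ℝ)^(n * B n)) := by rw [h8, h9]; ring
        _ < 1/(2:ℝ)^(n * B n) := by
            have h12 : 0 < 1/(2:ℝ)^(n * B n) := by positivity
            linarith
  have hωpos : 0 < ω := Summable.tsum_pos hu_sum (fun m => (hu_pos m).le) 0 (hu_pos 0)
  have hωlt : ω < 1 := by
    have h1 : ω ≤ ∑' m : ℕ, (1/2:ℝ)^(m+3) := Summable.tsum_le_tsum hu_le hu_sum hgeo3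
    have h2 : ∑' m : ℕ, (1/2:ℝ)^(m+3) = (1/4:ℝ) := by
      have hc : ∀ m : ℕ, (1/2:ℝ)^(m+3) = (1/2:ℝ)^3 * (1/2:ℝ)^m := fun m => by
        rw [pow_add]; ring
      rw [tsum_congr hc, tsum_mul_left,
        tsum_geometric_of_lt_one (by norm_num) (by norm_num)]
      norm_num
    linarith
  refine ⟨ω, phi0, 1, Nm, ⟨hωpos, hωlt⟩, hLiou.irrational, phi0_analytic, phi0_periodic,
    one_pos, ?_, ?_⟩
  · have hmono : StrictMono Nm := strictMono_nat_of_lt_succ hNmono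
    have hle : ∀ m, m ≤ Nm m := fun m => hmono.le_apply
    exact Filter.tendsto_atTop_mono hle Filter.tendsto_id
  · intro m
    have hτub : τ m ≤ (1/2:ℝ)^(4*(Nm m + 2^(B m)) + 9) := by
      have h1 := hτle m
      have h2 : 4*(Nm m + 2^(B m)) + 10 ≤ B (m+1) := by
        have h4 := hBs m
        have h5 : 0 ≤ (m+2) * B m := Nat.zero_le _
        omega
      have h3 : (1/2:ℝ)^(B (m+1)) ≤ (1/2:ℝ)^(4*(Nm m + 2^(B m)) + 10) :=
        pow_le_pow_of_le_one (by norm_num) (by norm_num) h2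
      calc τ m ≤ 2*(1/2:ℝ)^(B (m+1)) := h1
        _ ≤ 2*(1/2:ℝ)^(4*(Nm m + 2^(B m)) + 10) := by linarith
        _ = (1/2:ℝ)^(4*(Nm m + 2^(B m)) + 9) := by
            rw [pow_succ]
            ring
    have hωeq : ω = ((pnum m : ℕ):ℝ)/(((2^(B m) : ℕ)):ℝ) + τ m := by
      have h1 := hτeq m
      have h2 : (((2^(B m) : ℕ)):ℝ) = (2:ℝ)^(B m) := by push_cast; ring
      rw [h2]
      linarith
    have hkey := key_estimate ω (B m) (Nm m) (pnum m) (τ m) (hBge3 m) (hNge m)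
      (hτpos m) hτub (hpodd m) hωeq
    rw [ge_iff_le, one_mul, phi0_integral, sub_zero]
    have hρ := hThr (2^(B m)) (Nm m) (hNthr m)
    linarith
end
end
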